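/- arXiv:2508.21297 — 7 statements merged into one kernel-verified Lean document; each statement's English description precedes it below -/
import Mathlib

section
/- Let B ∈ ℂ^{n×n} be uniform. Then there exists a uniform matrix C ∈ ℂ^{(n+1)×(n+1)} whose characteristic polynomial equals X times the characteristic polynomial of B; in particular, the spectrum of C (as a multiset of eigenvalues) is the spectrum of B together with the additional eigenvalue 0. -/
/-- A square complex matrix is *uniform* if all of its entries have the same
modulus `κ` for some nonnegative real `κ`. -/
def IsUniform {ι : Type*} [Fintype ι] (B : Matrix ι ι ℂ) : Prop :=
  ∃ κ : ℝ, 0 ≤ κ ∧ ∀ i j, ‖B i j‖ = κ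

/-- A square complex matrix `A` is *apportionable* if there is an invertible
matrix `M` such that `M * A * M⁻¹` is uniform. -/
def IsApportionable {ι : Type*} [Fintype ι] [DecidableEq ι] (A : Matrix ι ι ℂ) : Prop :=
  ∃ M : Matrix ι ι ℂ, IsUnit M ∧ IsUniform (M * A * M⁻¹)

/-- A nonnegative real `κ` is an *apportionment constant* of `A` if there is an
invertible matrix `M` such that every entry of `M * A * M⁻¹` has modulus `κ`. -/
def IsApportionmentConstant {ι : Type*} [Fintype ι] [DecidableEq ι]
    (A : Matrix ι ι ℂ) (κ : ℝ) : Prop :=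
  0 ≤ κ ∧ ∃ M : Matrix ι ι ℂ, IsUnit M ∧ ∀ i j, ‖(M * A * M⁻¹) i j‖ = κ

/-- `K(A)`, the set of apportionment constants of `A`. -/
def apportionmentConstants {ι : Type*} [Fintype ι] [DecidableEq ι]
    (A : Matrix ι ι ℂ) : Set ℝ :=
  {κ : ℝ | IsApportionmentConstant A κ}

/-- The spectral radius of a complex square matrix: the maximum modulus of its
eigenvalues. -/
noncomputable def specRad {ι : Type*} [Fintype ι] [DecidableEq ι]
    (A : Matrix ι ι ℂ) : ℝ :=
  sSup ((fun z : ℂ => ‖z‖) '' spectrum ℂ A)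

/-! ### Auxiliary material for the construction -/

open Matrix Polynomial

namespace UniformSpectrumAux

/-- The sixth root of unity `e^{iπ/3}`. -/
noncomputable def om : ℂ := ⟨1/2, Real.sqrt 3 / 2⟩

/-- Its conjugate `e^{-iπ/3}`. -/
noncomputable def om' : ℂ := ⟨1/2, -(Real.sqrt 3 / 2)⟩

lemma sqrt3_sq : Real.sqrt 3 * Real.sqrt 3 = 3 :=
  Real.mul_self_sqrt (by norm_num)

lemma om_add : om + om' = 1 := by
  apply Complex.ext <;> simp [om, om'] <;> ring

lemma om_mul : om * om' = 1 := by
  apply Complex.ext <;>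
    simp [om, om', Complex.mul_re, Complex.mul_im] <;>
    nlinarith [sqrt3_sq]

lemma om_abs : ‖om‖ = 1 := by
  have h : ‖om‖ ^ 2 = 1 := by
    rw [Complex.sq_norm, Complex.normSq_apply]
    simp only [om]
    nlinarith [sqrt3_sq]
  nlinarith [norm_nonneg om]

lemma om'_abs : ‖om'‖ = 1 := by
  have h : ‖om'‖ ^ 2 = 1 := by
    rw [Complex.sq_norm, Complex.normSq_apply]
    simp only [om']
    nlinarith [sqrt3_sq]
  nlinarith [norm_nonneg om']

/-- Invariance of the characteristic polynomial under conjugation. -/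
lemma charpoly_conj' {ι : Type*} [Fintype ι] [DecidableEq ι]
    (M N A : Matrix ι ι ℂ) (h1 : M * N = 1) :
    (M * A * N).charpoly = A.charpoly := by
  have hMN : (M.map C) * (N.map C) = 1 := by
    rw [← Matrix.map_mul, h1, Matrix.map_one _ (map_zero _) (map_one _)]
  have hc : charmatrix (M * A * N)
      = (M.map C) * charmatrix A * (N.map C) := by
    rw [charmatrix, charmatrix]
    simp only [RingHom.mapMatrix_apply]
    have hs : (M.map C) * Matrix.scalar ι (X : ℂ[X])
        = Matrix.scalar ι (X : ℂ[X]) * (M.map C) := by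
      rw [Matrix.scalar_commute]
      intro r
      exact Polynomial.commute_X r
    rw [mul_sub, sub_mul, hs, mul_assoc (Matrix.scalar ι X), hMN, mul_one,
      ← Matrix.map_mul, ← Matrix.map_mul]
  unfold Matrix.charpoly
  rw [hc, det_mul, det_mul]
  have h2 : (M.map C).det * (N.map C).det = 1 := by
    rw [← det_mul, hMN, det_one]
  calc (M.map C).det * (charmatrix A).det * (N.map C).det
      = (M.map C).det * (N.map C).det * (charmatrix A).det := by ring
    _ = (charmatrix A).det := by rw [h2, one_mul]

lemma charpoly_zero_one : (0 : Matrix (Fin 1) (Fin 1) ℂ).charpoly = X := by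
  rw [Matrix.charpoly, Matrix.det_fin_one]
  simp [charmatrix_apply]

variable {n : ℕ} (p : Fin n) (B : Matrix (Fin n) (Fin n) ℂ)

noncomputable def Mmat : Matrix (Fin n ⊕ Fin 1) (Fin n ⊕ Fin 1) ℂ :=
  fromBlocks (diagonal fun i => if i = p then om else 1)
    (Matrix.of fun i _ => if i = p then (1:ℂ) else 0)
    (Matrix.of fun _ j => if j = p then (1:ℂ) else 0)
    (Matrix.of fun _ _ => -om)

noncomputable def Nmat : Matrix (Fin n ⊕ Fin 1) (Fin n ⊕ Fin 1) ℂ :=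
  fromBlocks 1
    (Matrix.of fun i _ => if i = p then om' else 0)
    (Matrix.of fun _ j => if j = p then om' else 0)
    (Matrix.of fun _ _ => (-1:ℂ))

noncomputable def Cmat : Matrix (Fin n ⊕ Fin 1) (Fin n ⊕ Fin 1) ℂ :=
  fromBlocks (Matrix.of fun i j => (if i = p then om else 1) * B i j)
    (Matrix.of fun i _ => (if i = p then om else 1) * B i p * om')
    (Matrix.of fun _ j => B p j)
    (Matrix.of fun _ _ => B p p * om')

lemma MN_eq_one : Mmat p * Nmat p = 1 := by
  rw [Mmat, Nmat]
  ext x y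
  rcases x with i | i <;> rcases y with j | j <;>
    rw [Matrix.mul_apply] <;>
    simp only [Fintype.sum_sum_type, Fin.sum_univ_one, fromBlocks_apply₁₁,
      fromBlocks_apply₁₂, fromBlocks_apply₂₁, fromBlocks_apply₂₂, Matrix.of_apply,
      diagonal_apply, Matrix.one_apply, ite_mul, mul_ite, zero_mul, mul_zero,
      one_mul, mul_one, mul_neg, neg_mul, Finset.sum_ite_eq, Finset.sum_ite_eq',
      Finset.mem_univ, if_true, Sum.inl.injEq, Sum.inr.injEq]
  · by_cases hi : i = p
    · by_cases hj : j = p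
      · simp [hi, hj, om_add]
      · have hj' : p ≠ j := fun h => hj h.symm
        simp [hi, hj, hj']
    · simp [hi]
  · by_cases hi : i = p <;> simp [hi]
    linear_combination om_mul
  · by_cases hj : j = p <;> simp [hj]
    linear_combination (-1 : ℂ) * om_mul
  · have hij : i = j := Subsingleton.elim i j
    subst hij
    simp
    linear_combination om_add

lemma MAN_eq : Mmat p * fromBlocks B 0 0 (0 : Matrix (Fin 1) (Fin 1) ℂ) * Nmat p
    = Cmat p B := by
  rw [Mmat, Nmat, Cmat, fromBlocks_multiply, fromBlocks_multiply]
  simp only [Matrix.mul_zero, Matrix.zero_mul, Matrix.mul_one, add_zero, zero_add]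
  ext x y
  rcases x with i | i <;> rcases y with j | j <;>
    simp only [fromBlocks_apply₁₁, fromBlocks_apply₁₂, fromBlocks_apply₂₁,
      fromBlocks_apply₂₂, Matrix.mul_apply, Matrix.of_apply, diagonal_apply,
      Fin.sum_univ_one, ite_mul, mul_ite, zero_mul, mul_zero, one_mul, mul_one,
      Finset.sum_ite_eq, Finset.sum_ite_eq', Finset.mem_univ, if_true]

lemma Cmat_abs {κ : ℝ} (hB : ∀ i j, ‖B i j‖ = κ) :
    ∀ x y, ‖Cmat p B x y‖ = κ := by
  intro x y
  rcases x with i | i <;> rcases y with j | j <;>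
    simp only [Cmat, fromBlocks_apply₁₁, fromBlocks_apply₁₂, fromBlocks_apply₂₁,
      fromBlocks_apply₂₂, Matrix.of_apply]
  · by_cases hi : i = p <;> simp [hi, om_abs, hB]
  · by_cases hi : i = p <;> simp [hi, om_abs, om'_abs, hB]
  · exact hB p j
  · simp [om'_abs, hB]

lemma Cmat_charpoly : (Cmat p B).charpoly = X * B.charpoly := by
  rw [← MAN_eq, charpoly_conj' _ _ _ (MN_eq_one p),
    Matrix.charpoly_fromBlocks_zero₂₁, charpoly_zero_one, mul_comm]

end UniformSpectrumAux

/-- If `B` is uniform, then there is a uniform matrix `C` of one larger order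
whose characteristic polynomial is `X` times that of `B`; in particular the
spectrum of `C` is that of `B` together with the extra eigenvalue `0`. -/
theorem uniform_spectrum_add_zero {n : ℕ} (B : Matrix (Fin n) (Fin n) ℂ)
    (hB : IsUniform B) :
    ∃ C : Matrix (Fin (n + 1)) (Fin (n + 1)) ℂ, IsUniform C ∧
      C.charpoly = Polynomial.X * B.charpoly := by
  obtain ⟨κ, hκ, hBκ⟩ := hB
  rcases n with _ | m
  · refine ⟨0, ⟨0, le_refl 0, by simp⟩, ?_⟩
    have hB1 : B.charpoly = 1 := by
      rw [Matrix.charpoly, Matrix.det_isEmpty]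
    rw [hB1, mul_one]
    exact UniformSpectrumAux.charpoly_zero_one
  · refine ⟨Matrix.reindex finSumFinEquiv finSumFinEquiv
      (UniformSpectrumAux.Cmat 0 B), ⟨κ, hκ, ?_⟩, ?_⟩
    · intro i j
      rw [Matrix.reindex_apply, Matrix.submatrix_apply]
      exact UniformSpectrumAux.Cmat_abs 0 B hBκ _ _
    · rw [Matrix.charpoly_reindex]
      exact UniformSpectrumAux.Cmat_charpoly 0 B
end

section
/- Let A ∈ ℂ^{n×n} with rank(A) = r ≥ n/2. Then the block diagonal matrix A ⊕ O_{2r−n} ∈ ℂ^{2r×2r} is apportionable, and every κ in the open interval (ρ(A)/2, ∞) is an apportionment constant of A ⊕ O_{2r−n}. In particular, A itself is apportionable when rank(A) = n/2. -/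
namespace Apport

open Matrix Module Submodule LinearMap


variable {ι ι' : Type*} [Fintype ι] [DecidableEq ι] [Fintype ι'] [DecidableEq ι']

/-- similarity: `B` is obtained from `A` by conjugation. -/
def SimC (A B : Matrix ι ι ℂ) : Prop := ∃ M : Matrix ι ι ℂ, IsUnit M ∧ M * A * M⁻¹ = B

lemma isUnit_of_mul_both {M N : Matrix ι ι ℂ} (h1 : M * N = 1) : IsUnit M := by
  rw [Matrix.isUnit_iff_isUnit_det]
  have : M.det * N.det = 1 := by rw [← Matrix.det_mul, h1, Matrix.det_one]
  exact IsUnit.of_mul_eq_one _ this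

lemma SimC.refl (A : Matrix ι ι ℂ) : SimC A A :=
  ⟨1, isUnit_one, by simp⟩

lemma SimC.trans {A B C : Matrix ι ι ℂ} (h1 : SimC A B) (h2 : SimC B C) : SimC A C := by
  obtain ⟨M1, hM1, rfl⟩ := h1
  obtain ⟨M2, hM2, rfl⟩ := h2
  exact ⟨M2 * M1, hM2.mul hM1, by rw [Matrix.mul_inv_rev]; simp only [Matrix.mul_assoc]⟩

lemma SimC.symm {A B : Matrix ι ι ℂ} (h : SimC A B) : SimC B A := by
  obtain ⟨M, hM, rfl⟩ := h
  have hd : IsUnit M.det := (Matrix.isUnit_iff_isUnit_det M).1 hM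
  have hMinv : IsUnit M⁻¹ := isUnit_of_mul_both (Matrix.nonsing_inv_mul _ hd)
  refine ⟨M⁻¹, hMinv, ?_⟩
  rw [Matrix.nonsing_inv_nonsing_inv _ hd]
  calc M⁻¹ * (M * A * M⁻¹) * M = (M⁻¹ * M) * A * (M⁻¹ * M) := by
        simp only [Matrix.mul_assoc]
  _ = A := by rw [Matrix.nonsing_inv_mul _ hd]; simp

/-- conjugating to the matrix of `mulVecLin` in any basis. -/
lemma simC_toMatrix (c : Basis ι ℂ (ι → ℂ)) (X : Matrix ι ι ℂ) :
    SimC X (LinearMap.toMatrix c c X.mulVecLin) := by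
  classical
  set e : Basis ι ℂ (ι → ℂ) := Pi.basisFun ℂ ι
  have he : LinearMap.toMatrix e e X.mulVecLin = X := by
    rw [show X.mulVecLin = Matrix.toLin' X from (Matrix.toLin'_apply' X).symm]
    rw [show LinearMap.toMatrix e e = LinearMap.toMatrix' from LinearMap.toMatrix_eq_toMatrix']
    exact LinearMap.toMatrix'_toLin' X
  set P : Matrix ι ι ℂ := LinearMap.toMatrix c e LinearMap.id
  set P' : Matrix ι ι ℂ := LinearMap.toMatrix e c LinearMap.id
  have hPP' : P * P' = 1 := by
    rw [show P * P' = LinearMap.toMatrix e e (LinearMap.id ∘ₗ LinearMap.id) from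
      (LinearMap.toMatrix_comp e c e LinearMap.id LinearMap.id).symm]
    simp [LinearMap.toMatrix_id]
  have hP'P : P' * P = 1 := by
    rw [show P' * P = LinearMap.toMatrix c c (LinearMap.id ∘ₗ LinearMap.id) from
      (LinearMap.toMatrix_comp c e c LinearMap.id LinearMap.id).symm]
    simp [LinearMap.toMatrix_id]
  have hP'inv : P'⁻¹ = P := Matrix.inv_eq_right_inv hP'P
  refine ⟨P', isUnit_of_mul_both hP'P, ?_⟩
  rw [hP'inv]; conv_lhs => rw [← he]
  have h1 : LinearMap.toMatrix c e (X.mulVecLin ∘ₗ LinearMap.id)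
      = LinearMap.toMatrix e e X.mulVecLin * P :=
    LinearMap.toMatrix_comp c e e X.mulVecLin LinearMap.id
  have h2 : LinearMap.toMatrix c c (LinearMap.id ∘ₗ (X.mulVecLin ∘ₗ LinearMap.id))
      = P' * LinearMap.toMatrix c e (X.mulVecLin ∘ₗ LinearMap.id) :=
    LinearMap.toMatrix_comp c e c LinearMap.id (X.mulVecLin ∘ₗ LinearMap.id)
  have := h2.symm
  rw [h1] at this
  simpa [Matrix.mul_assoc] using this

lemma SimC.cdet {A B : Matrix ι ι ℂ} (h : SimC A B) (μ : ℂ) :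
    (μ • 1 - A).det = (μ • 1 - B).det := by
  obtain ⟨M, hM, rfl⟩ := h
  have hd : IsUnit M.det := (Matrix.isUnit_iff_isUnit_det M).1 hM
  have key : μ • (1 : Matrix ι ι ℂ) - M * A * M⁻¹ = M * (μ • 1 - A) * M⁻¹ := by
    rw [Matrix.mul_sub, Matrix.sub_mul]
    congr 1
    rw [Matrix.mul_smul, Matrix.mul_one, Matrix.smul_mul, Matrix.mul_nonsing_inv _ hd]
  rw [key, Matrix.det_mul, Matrix.det_mul, Matrix.det_nonsing_inv, Ring.inverse_eq_inv']
  field_simp [hd.ne_zero]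

lemma simC_reindex (σ : ι ≃ ι') {A B : Matrix ι ι ℂ} (h : SimC A B) :
    SimC (Matrix.reindex σ σ A) (Matrix.reindex σ σ B) := by
  obtain ⟨M, hM, rfl⟩ := h
  have hmul : ∀ (C D : Matrix ι ι ℂ),
      Matrix.reindex σ σ (C * D) = Matrix.reindex σ σ C * Matrix.reindex σ σ D := by
    intro C D
    simp [Matrix.reindex_apply, Matrix.submatrix_mul_equiv]
  have hd : IsUnit M.det := (Matrix.isUnit_iff_isUnit_det M).1 hM
  have hone : Matrix.reindex σ σ (1 : Matrix ι ι ℂ) = 1 := by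
    simp [Matrix.reindex_apply, Matrix.submatrix_one_equiv]
  have hu : IsUnit (Matrix.reindex σ σ M) := by
    apply isUnit_of_mul_both (N := Matrix.reindex σ σ M⁻¹)
    rw [← hmul, Matrix.mul_nonsing_inv _ hd, hone]
  have hinv : (Matrix.reindex σ σ M)⁻¹ = Matrix.reindex σ σ M⁻¹ := by
    apply Matrix.inv_eq_right_inv
    rw [← hmul, Matrix.mul_nonsing_inv _ hd, hone]
  exact ⟨Matrix.reindex σ σ M, hu, by rw [hinv, ← hmul, ← hmul]⟩

/-- the perpendicular offset used to split `t` as a sum of two numbers of modulus `κ`. -/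
noncomputable def zpart (κ : ℝ) (t : ℂ) : ℂ :=
  Complex.I * (if t = 0 then 1 else t / (‖t‖ : ℝ)) *
    (Real.sqrt (κ ^ 2 - (‖t‖) ^ 2 / 4) : ℝ)

lemma zpart_ne_zero {κ : ℝ} (hκ : 0 < κ) {t : ℂ} (ht : ‖t‖ < 2 * κ) :
    zpart κ t ≠ 0 := by
  have hs : (0:ℝ) < κ ^ 2 - (‖t‖) ^ 2 / 4 := by
    have := norm_nonneg t
    nlinarith
  have hsqrt : Real.sqrt (κ ^ 2 - (‖t‖) ^ 2 / 4) ≠ 0 :=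
    ne_of_gt (Real.sqrt_pos.2 hs)
  have hdir : (if t = 0 then (1:ℂ) else t / (‖t‖ : ℝ)) ≠ 0 := by
    split_ifs with h
    · exact one_ne_zero
    · apply div_ne_zero h
      simpa [Complex.ofReal_eq_zero] using (norm_ne_zero_iff.mpr h)
  simp only [zpart]
  exact mul_ne_zero (mul_ne_zero Complex.I_ne_zero hdir) (by exact_mod_cast hsqrt)

lemma abs_half_add_zpart {κ : ℝ} (hκ : 0 < κ) {t : ℂ} (ht : ‖t‖ < 2 * κ)
    {c : ℂ} (hc : c = 1 ∨ c = -1) :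
    ‖t / 2 + c * zpart κ t‖ = κ := by
  have habs : (0:ℝ) ≤ ‖t‖ := norm_nonneg t
  have hs0 : (0:ℝ) ≤ κ ^ 2 - (‖t‖) ^ 2 / 4 := by nlinarith
  set s : ℝ := Real.sqrt (κ ^ 2 - (‖t‖) ^ 2 / 4) with hs
  have hssq : s ^ 2 = κ ^ 2 - (‖t‖) ^ 2 / 4 := Real.sq_sqrt hs0
  set d : ℂ := if t = 0 then 1 else t / (‖t‖ : ℝ) with hd
  have hnd : Complex.normSq d = 1 := by
    rw [hd]; split_ifs with h
    · simp
    · have h0 : ‖t‖ ≠ 0 := norm_ne_zero_iff.mpr h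
      rw [Complex.normSq_div]
      simp only [Complex.normSq_ofReal]
      rw [Complex.normSq_eq_norm_sq]
      field_simp
  have htd : t * (starRingEnd ℂ) d = (‖t‖ : ℝ) := by
    rw [hd]; split_ifs with h
    · simp [h]
    · rw [map_div₀, Complex.conj_ofReal, div_eq_mul_inv]
      rw [← mul_assoc, Complex.mul_conj]
      have h0 : (‖t‖ : ℂ) ≠ 0 := by
        simpa [Complex.ofReal_eq_zero] using (norm_ne_zero_iff.mpr h)
      rw [Complex.normSq_eq_norm_sq]
      push_cast
      field_simp
  have hcr : (starRingEnd ℂ) c = c := by rcases hc with h | h <;> simp [h]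
  have key : Complex.normSq (t / 2 + c * zpart κ t) = κ ^ 2 := by
    rw [Complex.normSq_add]
    have h1 : Complex.normSq (t / 2) = (‖t‖) ^ 2 / 4 := by
      rw [Complex.normSq_div, Complex.normSq_eq_norm_sq]
      norm_num
    have h2 : Complex.normSq (c * zpart κ t) = κ ^ 2 - (‖t‖) ^ 2 / 4 := by
      rw [Complex.normSq_mul]
      have hc2 : Complex.normSq c = 1 := by rcases hc with h | h <;> simp [h]
      rw [hc2, one_mul, zpart, ← hd]
      rw [Complex.normSq_mul, Complex.normSq_mul, hnd]
      simp only [Complex.normSq_I, Complex.normSq_ofReal]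
      rw [one_mul, one_mul, ← hs, ← hssq]; ring
    have h3 : (t / 2 * (starRingEnd ℂ) (c * zpart κ t)).re = 0 := by
      have hp : t / 2 * (starRingEnd ℂ) (c * zpart κ t)
          = -(c * Complex.I) * (((‖t‖) * s / 2 : ℝ) : ℂ) := by
        rw [zpart, ← hd, ← hs, _root_.map_mul, hcr, _root_.map_mul, _root_.map_mul,
          Complex.conj_I, Complex.conj_ofReal]
        have : t / 2 * (c * (-Complex.I * ((starRingEnd ℂ) d) * (s:ℂ)))
            = -(c * Complex.I) * ((t * (starRingEnd ℂ) d) * (s:ℂ) / 2) := by ring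
        rw [this, htd]
        push_cast
        ring
      rw [hp]
      rcases hc with h | h <;> subst h <;>
        simp [Complex.mul_re, Complex.I_re, Complex.I_im, Complex.ofReal_re, Complex.ofReal_im]
    rw [h1, h2, h3]
    ring
  have hsq : ‖t / 2 + c * zpart κ t‖ ^ 2 = κ ^ 2 := by
    rw [← Complex.sq_norm] at key
    exact key
  have habs2 : (0:ℝ) ≤ ‖t / 2 + c * zpart κ t‖ := norm_nonneg _
  nlinarith [hsq]

variable {r : ℕ}

/-- from every proper subspace one can escape with a vector whose coordinates split the
coordinates of `t` into two values of modulus `κ`. -/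
lemma escape {κ : ℝ} (hκ : 0 < κ) (t : Fin r → ℂ) (ht : ∀ i, ‖t i‖ < 2 * κ)
    (W : Submodule ℂ (Fin r → ℂ)) (hW : W ≠ ⊤) :
    ∃ v : Fin r → ℂ, v ∉ W ∧
      ∀ i, ‖v i‖ = κ ∧ ‖t i - v i‖ = κ := by
  set z : Fin r → ℂ := fun i => zpart κ (t i) with hz
  set cand : (Fin r → Bool) → (Fin r → ℂ) :=
    fun σ i => t i / 2 + (if σ i then 1 else -1) * z i with hcand
  have hprop : ∀ σ i, ‖cand σ i‖ = κ ∧ ‖t i - cand σ i‖ = κ := by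
    intro σ i
    constructor
    · exact abs_half_add_zpart hκ (ht i) (by rcases Bool.dichotomy (σ i) with h | h <;>
        simp [h])
    · have : t i - cand σ i = t i / 2 + (-(if σ i then 1 else -1)) * z i := by
        rw [hcand]; ring
      rw [this]
      exact abs_half_add_zpart hκ (ht i) (by rcases Bool.dichotomy (σ i) with h | h <;>
        simp [h])
  by_cases hesc : ∃ σ, cand σ ∉ W
  · obtain ⟨σ, hσ⟩ := hesc
    exact ⟨cand σ, hσ, hprop σ⟩
  · exfalso
    push_neg at hesc
    apply hW
    rw [eq_top_iff]
    intro x _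
    have hsingle : ∀ i : Fin r, (Pi.single i 1 : Fin r → ℂ) ∈ W := by
      intro i
      have h1 : cand (fun _ => true) ∈ W := hesc _
      have h2 : cand (fun j => ! (decide (j = i))) ∈ W := hesc _
      have hdiff : cand (fun _ => true) - cand (fun j => ! (decide (j = i)))
          = Pi.single i (2 * z i) := by
        funext j
        by_cases hji : j = i
        · subst hji
          simp [hcand, Pi.single_apply]
          ring
        · simp [hcand, hji, Pi.single_apply]
      have hmem : (Pi.single i (2 * z i) : Fin r → ℂ) ∈ W := by
        rw [← hdiff]; exact W.sub_mem h1 h2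
      have hz0 : (2 : ℂ) * z i ≠ 0 := by
        apply mul_ne_zero two_ne_zero
        exact zpart_ne_zero hκ (ht i)
      have : ((2 * z i)⁻¹ : ℂ) • (Pi.single i (2 * z i) : Fin r → ℂ)
          = Pi.single i 1 := by
        funext j
        by_cases hji : j = i
        · subst hji
          have hzi : z j ≠ 0 := zpart_ne_zero hκ (ht j)
          simp [Pi.single_apply]
          field_simp
        · simp [Pi.single_apply, hji]
      rw [← this]
      exact W.smul_mem _ hmem
    have hx : x = ∑ i : Fin r, (x i) • (Pi.single i 1 : Fin r → ℂ) := by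
      funext j
      rw [Finset.sum_apply]
      simp [Pi.single_apply]
    rw [hx]
    exact Submodule.sum_mem W fun i _ => W.smul_mem _ (hsingle i)

/-- an invertible matrix `Q` with all entries of modulus `κ` such that `T - Q` also has
all entries of modulus `κ`. -/
lemma exists_Q {κ : ℝ} (hκ : 0 < κ) (T : Matrix (Fin r) (Fin r) ℂ)
    (hT : ∀ i j, ‖T i j‖ < 2 * κ) :
    ∃ Q : Matrix (Fin r) (Fin r) ℂ, IsUnit Q ∧
      ∀ i j, ‖Q i j‖ = κ ∧ ‖T i j - Q i j‖ = κ := by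
  have hdim : finrank ℂ (Fin r → ℂ) = r := by
    rw [Module.finrank_pi]; simp
  -- build the columns by induction
  have main : ∀ k (hk : k ≤ r), ∃ c : Fin k → (Fin r → ℂ), LinearIndependent ℂ c ∧
      ∀ (j : Fin k) (i : Fin r), ‖c j i‖ = κ ∧
        ‖T i (Fin.castLE hk j) - c j i‖ = κ := by
    intro k
    induction k with
    | zero =>
      intro _
      exact ⟨fun j => absurd j.2 (by simp), linearIndependent_empty_type, fun j => absurd j.2 (by simp)⟩
    | succ k ih =>
      intro hk
      obtain ⟨c, hci, hce⟩ := ih (Nat.le_of_succ_le hk)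
      have hWne : Submodule.span ℂ (Set.range c) ≠ ⊤ := by
        intro htop
        have h1 : finrank ℂ (Submodule.span ℂ (Set.range c)) = k := by
          rw [finrank_span_eq_card hci]; simp
        rw [htop] at h1
        rw [finrank_top, hdim] at h1
        omega
      obtain ⟨v, hv, hvprop⟩ := escape hκ (fun i => T i (Fin.castLE hk (Fin.last k)))
        (fun i => hT _ _) _ hWne
      refine ⟨Fin.snoc c v, ?_, ?_⟩
      · rw [linearIndependent_fin_snoc]
        exact ⟨hci, hv⟩
      · intro j i
        induction j using Fin.lastCases with
        | last => simpa only [Fin.snoc_last] using hvprop i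
        | cast jj =>
          simp only [Fin.snoc_castSucc]
          have hcast : Fin.castLE hk (Fin.castSucc jj) = Fin.castLE (Nat.le_of_succ_le hk) jj := by
            ext; simp
          rw [hcast]
          exact hce jj i
  obtain ⟨c, hci, hce⟩ := main r le_rfl
  rcases Nat.eq_zero_or_pos r with hr | hr
  · subst hr
    refine ⟨1, isUnit_one, fun i => absurd i.2 (by simp)⟩
  · haveI : Nonempty (Fin r) := ⟨⟨0, hr⟩⟩
    set b : Basis (Fin r) ℂ (Fin r → ℂ) :=
      basisOfLinearIndependentOfCardEqFinrank hci (by simp [hdim])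
    have hb : ⇑b = c := coe_basisOfLinearIndependentOfCardEqFinrank _ _
    set Q : Matrix (Fin r) (Fin r) ℂ := Matrix.of fun i j => c j i with hQ
    have hQb : Q = (Pi.basisFun ℂ (Fin r)).toMatrix ⇑b := by
      ext i j
      rw [Basis.toMatrix_apply, Pi.basisFun_repr, hb]
      rfl
    have : Invertible Q := by
      rw [hQb]
      exact (Pi.basisFun ℂ (Fin r)).invertibleToMatrix b
    refine ⟨Q, isUnit_of_invertible Q, fun i j => ?_⟩
    have := hce j i
    simpa [hQ] using this

lemma exists_flag_basis (N : ℕ) :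
    ∀ (V : Type) [AddCommGroup V] [Module ℂ V] [FiniteDimensional ℂ V]
      (f : Module.End ℂ V), finrank ℂ V = N →
      ∃ c : Basis (Fin N) ℂ V, ∀ j, f (c j) ∈ span ℂ (⇑c '' {i | i ≤ j}) := by
  induction N with
  | zero =>
    intro V _ _ _ f hdim
    haveI : Subsingleton V := finrank_zero_iff.1 hdim
    exact ⟨Basis.empty V, fun j => j.elim0⟩
  | succ N ih =>
    intro V _ _ _ f hdim
    haveI : Nontrivial V := by
      rw [← finrank_pos_iff (R := ℂ)]
      omega
    obtain ⟨μ, hμ⟩ := Module.End.exists_eigenvalue f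
    obtain ⟨v, hv⟩ := hμ.exists_hasEigenvector
    have hv0 : v ≠ 0 := hv.right
    have hfv : f v = μ • v := hv.apply_eq_smul
    set L : Submodule ℂ V := span ℂ {v} with hL
    have hvL : v ∈ L := Submodule.mem_span_singleton_self v
    have hfL : L ≤ Submodule.comap f L := by
      rw [hL, Submodule.span_le]
      intro x hx
      rcases hx with rfl
      show f x ∈ L
      rw [hfv]
      exact Submodule.smul_mem _ _ hvL
    have hQdim : finrank ℂ (V ⧸ L) = N := by
      have h1 := Submodule.finrank_quotient_add_finrank L
      rw [finrank_span_singleton hv0] at h1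
      omega
    set fQ : Module.End ℂ (V ⧸ L) := Submodule.mapQ L L f hfL with hfQ
    obtain ⟨c', hc'⟩ := ih (V ⧸ L) fQ hQdim
    -- lift the basis
    have hsurj := Submodule.mkQ_surjective L
    set w : Fin N → V := fun j => Classical.choose (hsurj (c' j)) with hwdef
    have hw : ∀ j, L.mkQ (w j) = c' j := fun j => Classical.choose_spec (hsurj (c' j))
    have hcomp : (⇑(L.mkQ) ∘ w) = ⇑c' := funext fun j => hw j
    have hwind : LinearIndependent ℂ w := by
      apply LinearIndependent.of_comp (L.mkQ)
      rw [hcomp]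
      exact c'.linearIndependent
    have hvnot : v ∉ span ℂ (Set.range w) := by
      intro hmem
      rw [mem_span_range_iff_exists_fun] at hmem
      obtain ⟨a, ha⟩ := hmem
      have h0 : L.mkQ v = 0 := by
        rw [Submodule.mkQ_apply, Submodule.Quotient.mk_eq_zero]
        exact hvL
      have h1 : ∑ i, a i • c' i = 0 := by
        calc ∑ i, a i • c' i = ∑ i, a i • L.mkQ (w i) := by simp [hw]
        _ = L.mkQ (∑ i, a i • w i) := by rw [map_sum]; simp
        _ = L.mkQ v := by rw [ha]
        _ = 0 := h0
      have h2 : ∀ i, a i = 0 :=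
        Fintype.linearIndependent_iff.1 c'.linearIndependent a h1
      apply hv0
      rw [← ha]
      simp [h2]
    set g : Fin (N + 1) → V := Fin.cons v w with hgdef
    have hgi : LinearIndependent ℂ g := linearIndependent_fin_cons.2 ⟨hwind, hvnot⟩
    have hcard : Fintype.card (Fin (N + 1)) = finrank ℂ V := by simp [hdim]
    set c : Basis (Fin (N + 1)) ℂ V := basisOfLinearIndependentOfCardEqFinrank hgi hcard
      with hcdef
    have hc : ⇑c = g := coe_basisOfLinearIndependentOfCardEqFinrank _ _
    refine ⟨c, ?_⟩
    intro j
    induction j using Fin.cases with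
    | zero =>
      rw [hc]
      have hg0 : g 0 = v := Fin.cons_zero _ _
      rw [hg0, hfv, ← hg0]
      apply Submodule.smul_mem
      apply Submodule.subset_span
      exact ⟨0, Set.mem_setOf.2 (le_refl _), rfl⟩
    | succ jj =>
      rw [hc]
      have hgs : g jj.succ = w jj := Fin.cons_succ _ _ _
      rw [hgs]
      -- image under mkQ lands in the span of c' up to jj
      have hmk : L.mkQ (f (w jj)) = fQ (c' jj) := by
        rw [← hw jj, hfQ]
        rw [Submodule.mkQ_apply, Submodule.mkQ_apply, Submodule.mapQ_apply]
      have hflagQ : fQ (c' jj) ∈ span ℂ (⇑c' '' {i | i ≤ jj}) := hc' jj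
      have himg : ⇑c' '' {i | i ≤ jj} = ⇑(L.mkQ) '' (w '' {i | i ≤ jj}) := by
        rw [← Set.image_comp, hcomp]
      have hspan : span ℂ (⇑(L.mkQ) '' (w '' {i | i ≤ jj}))
          = Submodule.map (L.mkQ) (span ℂ (w '' {i | i ≤ jj})) :=
        Submodule.span_image _
      have hmem : f (w jj) ∈ span ℂ (w '' {i | i ≤ jj}) ⊔ L := by
        have h1 : L.mkQ (f (w jj)) ∈ Submodule.map (L.mkQ) (span ℂ (w '' {i | i ≤ jj})) := by
          rw [← hspan, ← himg, hmk]
          exact hflagQ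
        have h2 : f (w jj) ∈ Submodule.comap (L.mkQ)
            (Submodule.map (L.mkQ) (span ℂ (w '' {i | i ≤ jj}))) := h1
        rw [Submodule.comap_map_eq, Submodule.ker_mkQ] at h2
        exact h2
      have hle : span ℂ (w '' {i | i ≤ jj}) ⊔ L ≤ span ℂ (g '' {i | i ≤ jj.succ}) := by
        apply sup_le
        · apply Submodule.span_mono
          rintro x ⟨a, ha, rfl⟩
          refine ⟨a.succ, ?_, ?_⟩
          · exact Set.mem_setOf.2 (Fin.succ_le_succ_iff.2 ha)
          · exact Fin.cons_succ _ _ _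
        · rw [hL, Submodule.span_le]
          intro x hx
          rcases hx with rfl
          apply Submodule.subset_span
          refine ⟨0, ?_, ?_⟩
          · exact Set.mem_setOf.2 (Fin.zero_le _)
          · exact Fin.cons_zero _ _
      exact hle hmem

variable {r : ℕ}

/-- the key construction: conjugating `[[T, 1], [0, 0]]` to the uniform matrix
`[[T - Q, Q], [T - Q, Q]]`. -/
lemma key_block {κ : ℝ} (T Q : Matrix (Fin r) (Fin r) ℂ) (hQ : IsUnit Q)
    (hent : ∀ i j, ‖Q i j‖ = κ ∧ ‖T i j - Q i j‖ = κ) :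
    ∃ U : Matrix (Fin r ⊕ Fin r) (Fin r ⊕ Fin r) ℂ,
      SimC (Matrix.fromBlocks T 1 0 0) U ∧ ∀ i j, ‖U i j‖ = κ := by
  have hQd : IsUnit Q.det := (Matrix.isUnit_iff_isUnit_det Q).1 hQ
  set N : Matrix (Fin r ⊕ Fin r) (Fin r ⊕ Fin r) ℂ := Matrix.fromBlocks 1 0 1 Q⁻¹ with hN
  set N' : Matrix (Fin r ⊕ Fin r) (Fin r ⊕ Fin r) ℂ := Matrix.fromBlocks 1 0 (-Q) Q with hN'
  have hNN' : N * N' = 1 := by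
    rw [hN, hN', Matrix.fromBlocks_multiply]
    rw [← Matrix.fromBlocks_one]
    congr 1 <;> simp [Matrix.nonsing_inv_mul _ hQd]
  have hinv : N⁻¹ = N' := Matrix.inv_eq_right_inv hNN'
  refine ⟨Matrix.fromBlocks (T - Q) Q (T - Q) Q, ⟨N, isUnit_of_mul_both hNN', ?_⟩, ?_⟩
  · rw [hinv, hN, hN', Matrix.fromBlocks_multiply, Matrix.fromBlocks_multiply]
    congr 1 <;> first
      | (simp [Matrix.mul_sub, Matrix.sub_mul, sub_eq_add_neg, Matrix.nonsing_inv_mul _ hQd]; try ring_nf)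
  · rintro (i | i) (j | j) <;>
      simp only [Matrix.fromBlocks_apply₁₁, Matrix.fromBlocks_apply₁₂,
        Matrix.fromBlocks_apply₂₁, Matrix.fromBlocks_apply₂₂] <;>
      first
        | exact (hent i j).2
        | exact (hent i j).1
  
/-- conjugation by a block-diagonal matrix. -/
lemma simC_fromBlocks_diag {X T h : Matrix (Fin r) (Fin r) ℂ} (hh : IsUnit h)
    (hX : h * X * h⁻¹ = T) :
    SimC (Matrix.fromBlocks X 1 0 0 : Matrix (Fin r ⊕ Fin r) (Fin r ⊕ Fin r) ℂ)
      (Matrix.fromBlocks T 1 0 0) := by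
  have hd : IsUnit h.det := (Matrix.isUnit_iff_isUnit_det h).1 hh
  set M : Matrix (Fin r ⊕ Fin r) (Fin r ⊕ Fin r) ℂ := Matrix.fromBlocks h 0 0 h with hM
  set M' : Matrix (Fin r ⊕ Fin r) (Fin r ⊕ Fin r) ℂ := Matrix.fromBlocks h⁻¹ 0 0 h⁻¹ with hM'
  have hMM' : M * M' = 1 := by
    rw [hM, hM', Matrix.fromBlocks_multiply, ← Matrix.fromBlocks_one]
    congr 1 <;> simp [Matrix.mul_nonsing_inv _ hd]
  have hinv : M⁻¹ = M' := Matrix.inv_eq_right_inv hMM'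
  refine ⟨M, isUnit_of_mul_both hMM', ?_⟩
  rw [hinv, hM, hM', Matrix.fromBlocks_multiply, Matrix.fromBlocks_multiply]
  rw [← hX]
  congr 1 <;> simp [Matrix.mul_nonsing_inv _ hd, Matrix.mul_assoc]

/-- determinant of `μ•1 - fromBlocks B 1 0 0`. -/
lemma cdet_fromBlocks_top (B : Matrix (Fin r) (Fin r) ℂ) (μ : ℂ) :
    (μ • (1 : Matrix (Fin r ⊕ Fin r) (Fin r ⊕ Fin r) ℂ)
      - Matrix.fromBlocks B 1 0 0).det = (μ • 1 - B).det * μ ^ r := by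
  have h1 : μ • (1 : Matrix (Fin r ⊕ Fin r) (Fin r ⊕ Fin r) ℂ)
      - Matrix.fromBlocks B 1 0 0
      = Matrix.fromBlocks (μ • 1 - B) (-1) 0 (μ • 1) := by
    ext (i | i) (j | j) <;>
      simp [Matrix.fromBlocks_one, Matrix.one_apply, Matrix.smul_apply, Pi.smul_apply]
  rw [h1, Matrix.det_fromBlocks_zero₂₁]
  congr 1
  rw [smul_one_eq_diagonal, Matrix.det_diagonal]
  simp

/-- determinant of `μ•1 - fromBlocks A 0 0 0` with blocks of different sizes. -/
lemma cdet_fromBlocks_pad {n m : ℕ} (A : Matrix (Fin n) (Fin n) ℂ) (μ : ℂ) :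
    (μ • (1 : Matrix (Fin n ⊕ Fin m) (Fin n ⊕ Fin m) ℂ)
      - Matrix.fromBlocks A 0 0 0).det = (μ • 1 - A).det * μ ^ m := by
  have h1 : μ • (1 : Matrix (Fin n ⊕ Fin m) (Fin n ⊕ Fin m) ℂ)
      - Matrix.fromBlocks A 0 0 0
      = Matrix.fromBlocks (μ • 1 - A) 0 0 (μ • 1) := by
    ext (i | i) (j | j) <;>
      simp [Matrix.fromBlocks_one, Matrix.one_apply, Matrix.smul_apply, Pi.smul_apply]
  rw [h1, Matrix.det_fromBlocks_zero₂₁]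
  congr 1
  rw [smul_one_eq_diagonal, Matrix.det_diagonal]
  simp

/-- determinant transfer along reindexing. -/
lemma cdet_reindex {ι ι' : Type*} [Fintype ι] [DecidableEq ι] [Fintype ι'] [DecidableEq ι']
    (σ : ι ≃ ι') (B : Matrix ι ι ℂ) (μ : ℂ) :
    (μ • (1 : Matrix ι' ι' ℂ) - Matrix.reindex σ σ B).det = (μ • 1 - B).det := by
  have h1 : μ • (1 : Matrix ι' ι' ℂ) - Matrix.reindex σ σ B
      = Matrix.reindex σ σ (μ • 1 - B) := by
    ext i j
    simp [Matrix.reindex_apply, Matrix.one_apply, EmbeddingLike.apply_eq_iff_eq]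
  rw [h1, Matrix.reindex_apply, Matrix.det_submatrix_equiv_self]

variable {r : ℕ}

lemma exists_triangular (X : Matrix (Fin r) (Fin r) ℂ) :
    ∃ Y : Matrix (Fin r) (Fin r) ℂ, SimC X Y ∧ Y.BlockTriangular _root_.id := by
  have hdim : finrank ℂ (Fin r → ℂ) = r := by rw [Module.finrank_pi]; simp
  obtain ⟨c, hc⟩ := exists_flag_basis r (Fin r → ℂ) (X.mulVecLin) hdim
  refine ⟨LinearMap.toMatrix c c X.mulVecLin, simC_toMatrix c X, ?_⟩
  intro i j hij
  rw [LinearMap.toMatrix_apply]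
  have hsupp := (Basis.mem_span_image c).1 (hc j)
  have hns : i ∉ (c.repr (X.mulVecLin (c j))).support := by
    intro hmem
    have : i ∈ {k : Fin r | k ≤ j} := hsupp (by exact_mod_cast hmem)
    exact absurd this (by simpa using not_le.2 hij)
  exact Finsupp.notMem_support_iff.1 hns

lemma exists_small (X : Matrix (Fin r) (Fin r) ℂ) {b : ℝ} (hb : 0 < b)
    (hev : ∀ μ : ℂ, (μ • (1 : Matrix (Fin r) (Fin r) ℂ) - X).det = 0 → ‖μ‖ < b) :
    ∃ T, SimC X T ∧ ∀ i j, ‖T i j‖ < b := by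
  obtain ⟨Y, hXY, hYtri⟩ := exists_triangular X
  have hdiag : ∀ i, ‖Y i i‖ < b := by
    intro i
    apply hev
    rw [hXY.cdet (Y i i)]
    have htri : ((Y i i) • (1 : Matrix (Fin r) (Fin r) ℂ) - Y).BlockTriangular _root_.id := by
      have h1 : ((Y i i) • (1 : Matrix (Fin r) (Fin r) ℂ)).BlockTriangular _root_.id := by
        rw [smul_one_eq_diagonal]
        exact Matrix.blockTriangular_diagonal _
      exact h1.sub hYtri
    rw [Matrix.det_of_upperTriangular htri]
    apply Finset.prod_eq_zero (Finset.mem_univ i)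
    simp
  set C : ℝ := (∑ i, ∑ j, ‖Y i j‖) + 1 with hC
  have hsum0 : (0:ℝ) ≤ ∑ i, ∑ j, ‖Y i j‖ :=
    Finset.sum_nonneg fun i _ => Finset.sum_nonneg fun j _ => norm_nonneg _
  have hCpos : 0 < C := by rw [hC]; linarith
  have hCle : ∀ i j, ‖Y i j‖ ≤ C - 1 := by
    intro i j
    rw [hC]
    have h1 : ‖Y i j‖ ≤ ∑ j', ‖Y i j'‖ :=
      Finset.single_le_sum (fun j' _ => norm_nonneg _) (Finset.mem_univ j)
    have h2 : (∑ j', ‖Y i j'‖) ≤ ∑ i', ∑ j', ‖Y i' j'‖ :=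
      Finset.single_le_sum (f := fun i' => ∑ j', ‖Y i' j'‖)
        (fun i' _ => Finset.sum_nonneg fun j' _ => norm_nonneg _) (Finset.mem_univ i)
    simp only [add_sub_cancel_right]
    linarith
  set ε : ℝ := min 1 (b / C) with hε
  have hε0 : 0 < ε := lt_min one_pos (div_pos hb hCpos)
  have hε1 : ε ≤ 1 := min_le_left _ _
  have hεbC : ε ≤ b / C := min_le_right _ _
  have hnz : ∀ i : Fin r, ((ε:ℂ)) ^ (i:ℕ) ≠ 0 :=
    fun i => pow_ne_zero _ (by exact_mod_cast hε0.ne')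
  set d : Matrix (Fin r) (Fin r) ℂ := Matrix.diagonal (fun i : Fin r => ((ε:ℂ)) ^ (i:ℕ))
    with hd
  set d' : Matrix (Fin r) (Fin r) ℂ :=
    Matrix.diagonal (fun i : Fin r => (((ε:ℂ)) ^ (i:ℕ))⁻¹) with hd'
  have hdd' : d' * d = 1 := by
    rw [hd, hd', Matrix.diagonal_mul_diagonal]
    have hfn : (fun i : Fin r => (((ε:ℂ)) ^ (i:ℕ))⁻¹ * ((ε:ℂ)) ^ (i:ℕ))
        = fun _ : Fin r => (1:ℂ) := funext fun i => inv_mul_cancel₀ (hnz i)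
    rw [hfn, Matrix.diagonal_one]
  have hd'inv : d'⁻¹ = d := Matrix.inv_eq_right_inv hdd'
  refine ⟨d' * Y * d, hXY.trans ⟨d', isUnit_of_mul_both hdd', by rw [hd'inv]⟩, ?_⟩
  intro i j
  have hentry : (d' * Y * d) i j = (((ε:ℂ)) ^ (i:ℕ))⁻¹ * Y i j * ((ε:ℂ)) ^ (j:ℕ) := by
    rw [hd, hd', Matrix.mul_diagonal, Matrix.diagonal_mul]
  rw [hentry]
  have habs : ‖(((ε:ℂ)) ^ (i:ℕ))⁻¹ * Y i j * ((ε:ℂ)) ^ (j:ℕ)‖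
      = (ε ^ (i:ℕ))⁻¹ * ‖Y i j‖ * ε ^ (j:ℕ) := by
    rw [norm_mul, norm_mul, norm_inv, norm_pow, norm_pow, Complex.norm_real, Real.norm_eq_abs,
      abs_of_pos hε0]
  rw [habs]
  rcases lt_trichotomy (j:ℕ) (i:ℕ) with hij | hij | hij
  · have h0 : Y i j = 0 := hYtri (by simpa using hij)
    rw [h0]
    simpa using hb
  · have hii : (ε ^ (i:ℕ))⁻¹ * ‖Y i j‖ * ε ^ (j:ℕ) = ‖Y i j‖ := by
      rw [← hij]
      field_simp
    rw [hii]
    have hieqj : i = j := by exact Fin.ext (by omega)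
    rw [hieqj]
    exact hdiag j
  · have hsplit : (j:ℕ) = (i:ℕ) + ((j:ℕ) - (i:ℕ)) := by omega
    have hpow : ε ^ (j:ℕ) = ε ^ (i:ℕ) * ε ^ ((j:ℕ) - (i:ℕ)) := by
      rw [← pow_add, ← hsplit]
    have heq : (ε ^ (i:ℕ))⁻¹ * ‖Y i j‖ * ε ^ (j:ℕ)
        = ‖Y i j‖ * ε ^ ((j:ℕ) - (i:ℕ)) := by
      rw [hpow]
      have hne : ε ^ (i:ℕ) ≠ 0 := pow_ne_zero _ hε0.ne'
      field_simp
    rw [heq]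
    have hexp : 1 ≤ (j:ℕ) - (i:ℕ) := by omega
    have hpowle : ε ^ ((j:ℕ) - (i:ℕ)) ≤ ε := by
      calc ε ^ ((j:ℕ) - (i:ℕ)) ≤ ε ^ 1 := pow_le_pow_of_le_one hε0.le hε1 hexp
      _ = ε := pow_one ε
    have hYle := hCle i j
    have hY0 : 0 ≤ ‖Y i j‖ := norm_nonneg _
    have hεpow0 : 0 ≤ ε ^ ((j:ℕ) - (i:ℕ)) := pow_nonneg hε0.le _
    have hCm1 : 0 ≤ C - 1 := by
      have : C - 1 = ∑ i, ∑ j, ‖Y i j‖ := by rw [hC]; ring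
      linarith
    have hb1 : ‖Y i j‖ * ε ^ ((j:ℕ) - (i:ℕ)) ≤ (C - 1) * ε :=
      mul_le_mul hYle hpowle hεpow0 hCm1
    have hb2 : (C - 1) * ε < b := by
      rcases eq_or_lt_of_le hCm1 with hEq | hlt
      · rw [← hEq]
        simpa using hb
      · have h3 : (C - 1) * ε ≤ (C - 1) * (b / C) :=
          mul_le_mul_of_nonneg_left hεbC hCm1
        have h4 : (C - 1) * (b / C) < b := by
          rw [show (C - 1) * (b / C) = b * (C - 1) / C by ring, div_lt_iff₀ hCpos]
          have := mul_lt_mul_of_pos_left (show C - 1 < C by linarith) hb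
          linarith
        exact lt_of_le_of_lt h3 h4
    linarith

lemma exists_notMem_two {V : Type*} [AddCommGroup V] [Module ℂ V]
    (p q : Submodule ℂ V) (hp : p ≠ ⊤) (hq : q ≠ ⊤) : ∃ v, v ∉ p ∧ v ∉ q := by
  obtain ⟨a, ha⟩ : ∃ a, a ∉ p := by
    by_contra h; push_neg at h; exact hp (Submodule.eq_top_iff'.2 h)
  obtain ⟨b, hb⟩ : ∃ b, b ∉ q := by
    by_contra h; push_neg at h; exact hq (Submodule.eq_top_iff'.2 h)
  by_cases haq : a ∈ q
  · by_cases hbp : b ∈ p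
    · refine ⟨a + b, fun h => ha ?_, fun h => hb ?_⟩
      · simpa using p.sub_mem h hbp
      · simpa using q.sub_mem h haq
    · exact ⟨b, hbp, hb⟩
  · exact ⟨a, ha, haq⟩

lemma exists_common_avoid {V : Type*} [AddCommGroup V] [Module ℂ V] [FiniteDimensional ℂ V]
    (p q : Submodule ℂ V) (j : ℕ) :
    j + finrank ℂ p ≤ finrank ℂ V → j + finrank ℂ q ≤ finrank ℂ V →
    ∃ W : Submodule ℂ V, finrank ℂ W = j ∧ W ⊓ p = ⊥ ∧ W ⊓ q = ⊥ := by
  induction j with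
  | zero =>
    intro _ _
    refine ⟨⊥, finrank_bot ℂ V, ?_, ?_⟩ <;> simp
  | succ j ih =>
    intro hp hq
    obtain ⟨W, hWrank, hWp, hWq⟩ := ih (by omega) (by omega)
    have hsupne : ∀ s : Submodule ℂ V, j + 1 + finrank ℂ s ≤ finrank ℂ V →
        W ⊓ s = ⊥ → W ⊔ s ≠ ⊤ := by
      intro s hs hWs htop
      have h1 := Submodule.finrank_sup_add_finrank_inf_eq W s
      rw [hWs, htop] at h1
      rw [finrank_bot, finrank_top] at h1
      omega
    have hWsupP : W ⊔ p ≠ ⊤ := hsupne p hp hWp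
    have hWsupQ : W ⊔ q ≠ ⊤ := hsupne q hq hWq
    obtain ⟨v, hv1, hv2⟩ := exists_notMem_two _ _ hWsupP hWsupQ
    have hvW : v ∉ W := fun h => hv1 (Submodule.mem_sup_left h)
    have hv0 : v ≠ 0 := fun h => hv1 (h ▸ Submodule.zero_mem _)
    have hWv : W ⊓ span ℂ {v} = ⊥ := by
      rw [eq_bot_iff]
      intro x hx
      obtain ⟨hxW, hxv⟩ := Submodule.mem_inf.1 hx
      rw [Submodule.mem_span_singleton] at hxv
      obtain ⟨a, rfl⟩ := hxv
      rcases eq_or_ne a 0 with rfl | ha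
      · simp
      · exfalso
        apply hvW
        have := W.smul_mem a⁻¹ hxW
        simpa [smul_smul, inv_mul_cancel₀ ha] using this
    have hint : ∀ s : Submodule ℂ V, W ⊓ s = ⊥ → v ∉ W ⊔ s →
        (W ⊔ span ℂ {v}) ⊓ s = ⊥ := by
      intro s hWs hvs
      rw [eq_bot_iff]
      intro x hx
      obtain ⟨hx1, hx2⟩ := Submodule.mem_inf.1 hx
      rw [Submodule.mem_sup] at hx1
      obtain ⟨w, hw, y, hy, rfl⟩ := hx1
      rw [Submodule.mem_span_singleton] at hy
      obtain ⟨a, rfl⟩ := hy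
      rcases eq_or_ne a 0 with rfl | ha
      · have hmem : w ∈ W ⊓ s := ⟨hw, by simpa using hx2⟩
        rw [hWs] at hmem
        simpa using hmem
      · exfalso
        apply hvs
        have hmem : a • v ∈ W ⊔ s := by
          have h3 : (w + a • v) - w ∈ W ⊔ s :=
            Submodule.sub_mem _ (Submodule.mem_sup_right hx2) (Submodule.mem_sup_left hw)
          simpa using h3
        have := (W ⊔ s).smul_mem a⁻¹ hmem
        simpa [smul_smul, inv_mul_cancel₀ ha] using this
    refine ⟨W ⊔ span ℂ {v}, ?_, hint p hWp hv1, hint q hWq hv2⟩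
    have h1 := Submodule.finrank_sup_add_finrank_inf_eq W (span ℂ {v})
    rw [hWv, finrank_bot, finrank_span_singleton hv0, hWrank] at h1
    omega

lemma rank_padded {n m : ℕ} (A : Matrix (Fin n) (Fin n) ℂ) :
    (Matrix.fromBlocks A 0 0 (0 : Matrix (Fin m) (Fin m) ℂ)).rank = A.rank := by
  apply le_antisymm
  · have hfact : Matrix.fromBlocks A 0 0 (0 : Matrix (Fin m) (Fin m) ℂ)
        = (Matrix.fromRows (1 : Matrix (Fin n) (Fin n) ℂ) (0 : Matrix (Fin m) (Fin n) ℂ))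
          * (A * Matrix.fromCols (1 : Matrix (Fin n) (Fin n) ℂ)
              (0 : Matrix (Fin n) (Fin m) ℂ)) := by
      rw [← Matrix.mul_assoc, Matrix.fromRows_mul, Matrix.one_mul, Matrix.zero_mul,
        Matrix.fromRows_mul_fromCols]
      simp
    rw [hfact]
    calc (Matrix.fromRows (1 : Matrix (Fin n) (Fin n) ℂ) (0 : Matrix (Fin m) (Fin n) ℂ)
          * (A * Matrix.fromCols (1 : Matrix (Fin n) (Fin n) ℂ) (0 : Matrix (Fin n) (Fin m) ℂ))).rank
        ≤ (A * Matrix.fromCols (1 : Matrix (Fin n) (Fin n) ℂ)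
            (0 : Matrix (Fin n) (Fin m) ℂ)).rank := Matrix.rank_mul_le_right _ _
      _ ≤ A.rank := Matrix.rank_mul_le_left _ _
  · have hfact2 : A = Matrix.fromCols (1 : Matrix (Fin n) (Fin n) ℂ)
        (0 : Matrix (Fin n) (Fin m) ℂ)
        * (Matrix.fromBlocks A 0 0 (0 : Matrix (Fin m) (Fin m) ℂ)
            * Matrix.fromRows (1 : Matrix (Fin n) (Fin n) ℂ) (0 : Matrix (Fin m) (Fin n) ℂ)) := by
      rw [Matrix.fromBlocks_mul_fromRows, Matrix.fromCols_mul_fromRows]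
      simp
    conv_lhs => rw [hfact2]
    calc (Matrix.fromCols (1 : Matrix (Fin n) (Fin n) ℂ) (0 : Matrix (Fin n) (Fin m) ℂ)
          * (Matrix.fromBlocks A 0 0 (0 : Matrix (Fin m) (Fin m) ℂ)
            * Matrix.fromRows (1 : Matrix (Fin n) (Fin n) ℂ)
              (0 : Matrix (Fin m) (Fin n) ℂ))).rank
        ≤ (Matrix.fromBlocks A 0 0 (0 : Matrix (Fin m) (Fin m) ℂ)
            * Matrix.fromRows (1 : Matrix (Fin n) (Fin n) ℂ)
              (0 : Matrix (Fin m) (Fin n) ℂ)).rank := Matrix.rank_mul_le_right _ _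
      _ ≤ (Matrix.fromBlocks A 0 0 (0 : Matrix (Fin m) (Fin m) ℂ)).rank :=
          Matrix.rank_mul_le_left _ _

lemma exists_X {n m r : ℕ} (hcard : n + m = 2 * r) (A : Matrix (Fin n) (Fin n) ℂ)
    (hr : A.rank = r) :
    ∃ (X : Matrix (Fin r) (Fin r) ℂ) (σ : (Fin r ⊕ Fin r) ≃ (Fin n ⊕ Fin m)),
      SimC (Matrix.fromBlocks A 0 0 (0 : Matrix (Fin m) (Fin m) ℂ))
        (Matrix.reindex σ σ (Matrix.fromBlocks X 1 0 0)) := by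
  classical
  set Ahat : Matrix (Fin n ⊕ Fin m) (Fin n ⊕ Fin m) ℂ :=
    Matrix.fromBlocks A 0 0 (0 : Matrix (Fin m) (Fin m) ℂ) with hAhat
  set f : ((Fin n ⊕ Fin m) → ℂ) →ₗ[ℂ] ((Fin n ⊕ Fin m) → ℂ) := Ahat.mulVecLin with hf
  have hV : finrank ℂ ((Fin n ⊕ Fin m) → ℂ) = 2 * r := by
    rw [Module.finrank_pi]
    simp [Fintype.card_sum]
    omega
  have hrank : finrank ℂ (LinearMap.range f) = r := by
    have h1 : Ahat.rank = r := by rw [hAhat, rank_padded, hr]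
    exact h1
  have hker : finrank ℂ (LinearMap.ker f) = r := by
    have h1 := LinearMap.finrank_range_add_finrank_ker f
    rw [hrank, hV] at h1
    omega
  obtain ⟨W, hWr, hWR, hWK⟩ := exists_common_avoid (LinearMap.range f) (LinearMap.ker f) r
    (by omega) (by omega)
  have hcompl : IsCompl (LinearMap.range f) W := by
    constructor
    · rw [disjoint_iff, inf_comm]
      exact hWR
    · rw [codisjoint_iff]
      apply Submodule.eq_top_of_finrank_eq
      have h1 := Submodule.finrank_sup_add_finrank_inf_eq (LinearMap.range f) W
      rw [inf_comm, hWR, finrank_bot, hrank, hWr] at h1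
      rw [hV]
      omega
  set g : W →ₗ[ℂ] LinearMap.range f :=
    LinearMap.codRestrict (LinearMap.range f) (f.domRestrict W)
      (fun c => LinearMap.mem_range.2 ⟨c.1, rfl⟩) with hg
  have hgcoe : ∀ x : W, (g x).1 = f x.1 := fun x => rfl
  have hginj : Function.Injective g := by
    rw [← LinearMap.ker_eq_bot, eq_bot_iff]
    intro x hx
    have hx0 : f ↑x = 0 := by
      have := congrArg (Subtype.val) (LinearMap.mem_ker.1 hx)
      simpa [hgcoe] using this
    have hmem : (↑x : (Fin n ⊕ Fin m) → ℂ) ∈ W ⊓ LinearMap.ker f := ⟨x.2, hx0⟩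
    rw [hWK] at hmem
    have : (↑x : (Fin n ⊕ Fin m) → ℂ) = 0 := by simpa using hmem
    simpa [Submodule.mem_bot] using Subtype.ext this
  have hgsurj : Function.Surjective g := by
    rw [← LinearMap.range_eq_top]
    apply Submodule.eq_top_of_finrank_eq
    rw [LinearMap.finrank_range_of_inj hginj, hWr]
    rw [hrank]
  set φ : W ≃ₗ[ℂ] LinearMap.range f := LinearEquiv.ofBijective g ⟨hginj, hgsurj⟩ with hφ
  set bW : Basis (Fin r) ℂ W := (Module.finBasis ℂ W).reindex (finCongr hWr) with hbW
  set bR : Basis (Fin r) ℂ (LinearMap.range f) := bW.map φ with hbR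
  set ψ : (LinearMap.range f × W) ≃ₗ[ℂ] ((Fin n ⊕ Fin m) → ℂ) :=
    Submodule.prodEquivOfIsCompl (LinearMap.range f) W hcompl with hψ
  set cb : Basis (Fin r ⊕ Fin r) ℂ ((Fin n ⊕ Fin m) → ℂ) := (bR.prod bW).map ψ with hcb
  have hcb_inl : ∀ i, cb (Sum.inl i) = ↑(bR i) := by
    intro i
    rw [hcb, Basis.map_apply, Basis.prod_apply]
    simp [hψ, Submodule.coe_prodEquivOfIsCompl]
  have hcb_inr : ∀ i, cb (Sum.inr i) = ↑(bW i) := by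
    intro i
    rw [hcb, Basis.map_apply, Basis.prod_apply]
    simp [hψ, Submodule.coe_prodEquivOfIsCompl]
  have hfw : ∀ i, f ↑(bW i) = ↑(bR i) := by
    intro i
    rw [hbR, Basis.map_apply]
    rfl
  have hrepr0 : ∀ (x : (Fin n ⊕ Fin m) → ℂ) (hx : x ∈ LinearMap.range f) (i : Fin r),
      cb.repr x (Sum.inr i) = 0 := by
    intro x hx i
    rw [hcb]
    have h1 : ((bR.prod bW).map ψ).repr x = (bR.prod bW).repr (ψ.symm x) := by
      rw [Basis.map_repr]
      rfl
    rw [h1]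
    have hψsymm : ψ.symm x = (⟨x, hx⟩, 0) :=
      Submodule.prodEquivOfIsCompl_symm_apply_left _ _ hcompl ⟨x, hx⟩
    rw [hψsymm, Basis.prod_repr_inr]
    simp
  set X : Matrix (Fin r) (Fin r) ℂ :=
    Matrix.of fun i j => cb.repr (f (cb (Sum.inl j))) (Sum.inl i) with hX
  have hmat : LinearMap.toMatrix cb cb f = Matrix.fromBlocks X 1 0 0 := by
    ext i j
    rcases i with i | i <;> rcases j with j | j
    · rw [LinearMap.toMatrix_apply, Matrix.fromBlocks_apply₁₁]
      rfl
    · rw [LinearMap.toMatrix_apply, Matrix.fromBlocks_apply₁₂, hcb_inr, hfw, ← hcb_inl,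
        cb.repr_self]
      simp [Finsupp.single_apply, Matrix.one_apply, eq_comm]
    · rw [LinearMap.toMatrix_apply, Matrix.fromBlocks_apply₂₁]
      exact hrepr0 _ (LinearMap.mem_range_self f _) i
    · rw [LinearMap.toMatrix_apply, Matrix.fromBlocks_apply₂₂, hcb_inr, hfw]
      rw [hrepr0 _ (bR j).2 i]
      simp
  set σ : (Fin r ⊕ Fin r) ≃ (Fin n ⊕ Fin m) :=
    Fintype.equivOfCardEq (by simp [Fintype.card_sum]; omega) with hσ
  refine ⟨X, σ, ?_⟩
  have h1 := simC_toMatrix (cb.reindex σ) Ahat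
  have h2 : LinearMap.toMatrix (cb.reindex σ) (cb.reindex σ) Ahat.mulVecLin
      = Matrix.reindex σ σ (Matrix.fromBlocks X 1 0 0) := by
    ext i j
    rw [LinearMap.toMatrix_apply, Basis.repr_reindex_apply, Basis.reindex_apply]
    rw [show (Matrix.reindex σ σ (Matrix.fromBlocks X 1 0 0)) i j
      = (Matrix.fromBlocks X 1 0 0) (σ.symm i) (σ.symm j) from rfl]
    rw [← hmat, LinearMap.toMatrix_apply]
  rw [h2] at h1
  exact h1

lemma det_smul_one_sub_eq_zero_iff_spectrum {ι : Type*} [Fintype ι] [DecidableEq ι]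
    (A : Matrix ι ι ℂ) (μ : ℂ) :
    (μ • (1 : Matrix ι ι ℂ) - A).det = 0 ↔ μ ∈ spectrum ℂ A := by
  rw [spectrum.mem_iff, Algebra.algebraMap_eq_smul_one]
  rw [Matrix.isUnit_iff_isUnit_det, isUnit_iff_ne_zero]
  simp


end Apport

/-- If `rank A = r ≥ n / 2`, then `A ⊕ O_{2r - n}` is apportionable, every
`κ ∈ (ρ(A)/2, ∞)` is an apportionment constant of `A ⊕ O_{2r - n}`, and in
particular `A` itself is apportionable when `rank A = n / 2`. -/
theorem apportionable_pad_to_double_rank {n r : ℕ} (A : Matrix (Fin n) (Fin n) ℂ)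
    (hr : A.rank = r) (hrn : n ≤ 2 * r) :
    (IsApportionable
        (Matrix.fromBlocks A 0 0 (0 : Matrix (Fin (2 * r - n)) (Fin (2 * r - n)) ℂ)) ∧
      ∀ κ : ℝ, specRad A / 2 < κ →
        IsApportionmentConstant
          (Matrix.fromBlocks A 0 0 (0 : Matrix (Fin (2 * r - n)) (Fin (2 * r - n)) ℂ)) κ) ∧
    (n = 2 * r → IsApportionable A) := by
  classical
  set m := 2 * r - n with hm
  have hcard : n + m = 2 * r := by omega
  set Ahat : Matrix (Fin n ⊕ Fin m) (Fin n ⊕ Fin m) ℂ :=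
    Matrix.fromBlocks A 0 0 (0 : Matrix (Fin m) (Fin m) ℂ) with hAhat
  have hρ0 : 0 ≤ specRad A := by
    apply Real.sSup_nonneg
    rintro x ⟨μ, _, rfl⟩
    exact norm_nonneg μ
  have hmain : ∀ κ : ℝ, specRad A / 2 < κ → IsApportionmentConstant Ahat κ := by
    intro κ hκgt
    have hκ0 : 0 < κ := by linarith
    obtain ⟨X, σ, hsim⟩ := Apport.exists_X hcard A hr
    have hevX : ∀ μ : ℂ, (μ • (1 : Matrix (Fin r) (Fin r) ℂ) - X).det = 0 →
        ‖μ‖ < 2 * κ := by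
      intro μ hdet
      rcases eq_or_ne μ 0 with rfl | hμ
      · simpa using (by linarith : (0:ℝ) < 2 * κ)
      · have h1 : (μ • (1 : Matrix (Fin n ⊕ Fin m) (Fin n ⊕ Fin m) ℂ) - Ahat).det
            = (μ • 1 - X).det * μ ^ r := by
          rw [hsim.cdet μ, Apport.cdet_reindex σ _ μ, Apport.cdet_fromBlocks_top]
        have h2 : (μ • (1 : Matrix (Fin n ⊕ Fin m) (Fin n ⊕ Fin m) ℂ) - Ahat).det
            = (μ • 1 - A).det * μ ^ m := Apport.cdet_fromBlocks_pad A μ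
        have h3 : (μ • (1 : Matrix (Fin n) (Fin n) ℂ) - A).det * μ ^ m = 0 := by
          rw [← h2, h1, hdet, zero_mul]
        have h4 : (μ • (1 : Matrix (Fin n) (Fin n) ℂ) - A).det = 0 := by
          rcases mul_eq_zero.1 h3 with h | h
          · exact h
          · exact absurd h (pow_ne_zero _ hμ)
        have h5 : μ ∈ spectrum ℂ A := (Apport.det_smul_one_sub_eq_zero_iff_spectrum A μ).1 h4
        have h6 : ‖μ‖ ≤ specRad A := by
          apply le_csSup
          · exact ((Matrix.finite_spectrum A).image _).bddAbove
          · exact ⟨μ, h5, rfl⟩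
        linarith
    obtain ⟨T, hXT, hTsmall⟩ := Apport.exists_small X (by linarith : (0:ℝ) < 2 * κ) hevX
    obtain ⟨Q, hQu, hQe⟩ := Apport.exists_Q hκ0 T hTsmall
    obtain ⟨U, hTU, hUe⟩ := Apport.key_block T Q hQu hQe
    obtain ⟨h, hh, hhX⟩ := hXT
    have hblock := Apport.simC_fromBlocks_diag hh hhX
    have htotal : Apport.SimC Ahat (Matrix.reindex σ σ U) :=
      hsim.trans (Apport.simC_reindex σ (hblock.trans hTU))
    obtain ⟨M, hMu, hMeq⟩ := htotal
    refine ⟨le_of_lt hκ0, M, hMu, ?_⟩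
    intro i j
    rw [hMeq]
    exact hUe _ _
  refine ⟨⟨?_, hmain⟩, ?_⟩
  · obtain ⟨hκ0, M, hMu, hent⟩ := hmain (specRad A / 2 + 1) (by linarith)
    exact ⟨M, hMu, ⟨specRad A / 2 + 1, hκ0, hent⟩⟩
  · intro h2r
    have hm0 : m = 0 := by omega
    haveI : IsEmpty (Fin m) := by rw [hm0]; infer_instance
    set τ : (Fin n ⊕ Fin m) ≃ Fin n := Equiv.sumEmpty (Fin n) (Fin m) with hτ
    obtain ⟨hκ0, M, hMu, hent⟩ := hmain (specRad A / 2 + 1) (by linarith)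
    have hsimA : Apport.SimC Ahat (M * Ahat * M⁻¹) := ⟨M, hMu, rfl⟩
    have hre := Apport.simC_reindex τ hsimA
    have hAA : Matrix.reindex τ τ Ahat = A := by
      ext i j
      rw [Matrix.reindex_apply, Matrix.submatrix_apply]
      have h1 : τ.symm i = Sum.inl i := rfl
      have h2 : τ.symm j = Sum.inl j := rfl
      rw [h1, h2, hAhat, Matrix.fromBlocks_apply₁₁]
    rw [hAA] at hre
    obtain ⟨M', hM'u, hM'eq⟩ := hre
    refine ⟨M', hM'u, ⟨specRad A / 2 + 1, hκ0, ?_⟩⟩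
    intro i j
    rw [hM'eq]
    rw [Matrix.reindex_apply, Matrix.submatrix_apply]
    exact hent _ _
end

section
/- Let n ≥ 3 and let A ∈ ℂ^{n×n} be a rank one perturbation of the identity, i.e., A = I + B for some matrix B ∈ ℂ^{n×n} with rank(B) = 1. Then A is apportionable if and only if there exists λ ∈ ℂ with Re(λ) = 1 − n/2 such that A is similar to the block diagonal matrix I_{n−1} ⊕ [λ] (the diagonal matrix diag(1, …, 1, λ)). -/
open Matrix Complex in
private lemma rank_one_decomp {n : ℕ} (B : Matrix (Fin n) (Fin n) ℂ) (hB : B.rank = 1) :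
    ∃ x y : Fin n → ℂ, ∀ i j, B i j = x i * y j := by
  have h1 : Module.finrank ℂ (LinearMap.range B.mulVecLin) = 1 := hB
  rw [finrank_eq_one_iff'] at h1
  obtain ⟨v, hv0, hv⟩ := h1
  choose c hc using hv
  refine ⟨fun i => (v : Fin n → ℂ) i,
    fun j => c ⟨B.mulVecLin (Pi.single j 1), LinearMap.mem_range_self _ _⟩, ?_⟩
  intro i j
  have h := hc ⟨B.mulVecLin (Pi.single j 1), LinearMap.mem_range_self _ _⟩
  have h2 := congrArg (fun w : LinearMap.range B.mulVecLin => (w : Fin n → ℂ) i) h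
  simp only [Submodule.coe_smul, Pi.smul_apply, smul_eq_mul] at h2
  rw [mul_comm]
  rw [h2]
  simp [Matrix.mulVecLin_apply, Matrix.mulVec_single]

open Matrix in
private lemma trace_conj {n : ℕ} (M B : Matrix (Fin n) (Fin n) ℂ) (hM : IsUnit M) :
    (M * B * M⁻¹).trace = B.trace := by
  rw [Matrix.trace_mul_comm, ← Matrix.mul_assoc, Matrix.nonsing_inv_mul _ ((Matrix.isUnit_iff_isUnit_det M).mp hM), Matrix.one_mul]

open Matrix in
private lemma rank_conj {n : ℕ} (M B : Matrix (Fin n) (Fin n) ℂ) (hM : IsUnit M) :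
    (M * B * M⁻¹).rank = B.rank := by
  have hd := (Matrix.isUnit_iff_isUnit_det M).mp hM
  have hd' : IsUnit M⁻¹.det := (Matrix.isUnit_nonsing_inv_det M hd)
  rw [Matrix.rank_mul_eq_left_of_isUnit_det _ _ hd', Matrix.rank_mul_eq_right_of_isUnit_det M B hd]

open Matrix Complex in
private lemma fourier_sum {n : ℕ} (hn : n ≠ 0) (i j : Fin n) :
    ∑ k : Fin n, (Complex.exp (2 * Real.pi * I / n)) ^ ((i : ℕ) * (k : ℕ)) *
      ((Complex.exp (2 * Real.pi * I / n)) ^ ((j : ℕ) * (k : ℕ)))⁻¹ =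
      if i = j then (n : ℂ) else 0 := by
  set ζ := Complex.exp (2 * Real.pi * I / n) with hζ
  have hprim : IsPrimitiveRoot ζ n := Complex.isPrimitiveRoot_exp n hn
  have hζ0 : ζ ≠ 0 := Complex.exp_ne_zero _
  set w : ℂ := ζ ^ (i : ℕ) * (ζ ^ (j : ℕ))⁻¹ with hw
  have hterm : ∀ k : Fin n, ζ ^ ((i : ℕ) * (k : ℕ)) * (ζ ^ ((j : ℕ) * (k : ℕ)))⁻¹ = w ^ (k : ℕ) := by
    intro k
    rw [hw, mul_pow, inv_pow, ← pow_mul, ← pow_mul]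
  rw [Finset.sum_congr rfl (fun k _ => hterm k)]
  rw [Fin.sum_univ_eq_sum_range (fun k => w ^ k) n]
  by_cases hij : i = j
  · subst hij
    have : w = 1 := mul_inv_cancel₀ (pow_ne_zero _ hζ0)
    simp [this, hn]
  · rw [if_neg hij]
    have hw1 : w ≠ 1 := by
      intro h
      rw [hw, mul_inv_eq_one₀ (pow_ne_zero _ hζ0)] at h
      exact hij (Fin.ext (hprim.pow_inj i.isLt j.isLt h))
    have hwn : w ^ n = 1 := by
      rw [hw, mul_pow, inv_pow, ← pow_mul, ← pow_mul, mul_comm (i : ℕ) n, mul_comm (j : ℕ) n,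
        pow_mul, pow_mul, hprim.pow_eq_one, one_pow, one_pow, inv_one, mul_one]
    rw [geom_sum_eq hw1, hwn, sub_self, zero_div]

open Matrix Complex in
private lemma backward {n : ℕ} (hn : 3 ≤ n) (A : Matrix (Fin n) (Fin n) ℂ)
    (lam : ℂ) (hre : lam.re = 1 - (n : ℝ) / 2)
    (S : Matrix (Fin n) (Fin n) ℂ) (hS : IsUnit S)
    (hSA : S * A * S⁻¹ = Matrix.diagonal (fun i : Fin n => if (i : ℕ) = n - 1 then lam else 1)) :
    IsApportionable A := by
  have hn0 : n ≠ 0 := by omega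
  have hnC : (n : ℂ) ≠ 0 := Nat.cast_ne_zero.mpr hn0
  set ζ : ℂ := Complex.exp (2 * Real.pi * I / n) with hζdef
  have hζ0 : ζ ≠ 0 := Complex.exp_ne_zero _
  have hζabs : ∀ k : ℕ, ‖ζ ^ k‖ = 1 := by
    intro k
    rw [norm_pow]
    rw [show ‖ζ‖ = 1 from (Complex.isPrimitiveRoot_exp n hn0).norm'_eq_one hn0]
    simp
  set F : Matrix (Fin n) (Fin n) ℂ := Matrix.of fun i j => ζ ^ ((i : ℕ) * (j : ℕ)) with hFdef
  set G : Matrix (Fin n) (Fin n) ℂ :=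
    Matrix.of fun i j => (n : ℂ)⁻¹ * (ζ ^ ((i : ℕ) * (j : ℕ)))⁻¹ with hGdef
  set D : Matrix (Fin n) (Fin n) ℂ :=
    Matrix.diagonal (fun i : Fin n => if (i : ℕ) = n - 1 then lam else 1) with hDdef
  have hFG : F * G = 1 := by
    ext i j
    rw [Matrix.mul_apply, Matrix.one_apply]
    have : ∀ k : Fin n, F i k * G k j =
        (n : ℂ)⁻¹ * (ζ ^ ((i : ℕ) * (k : ℕ)) * (ζ ^ ((j : ℕ) * (k : ℕ)))⁻¹) := by
      intro k
      simp only [hFdef, hGdef, Matrix.of_apply]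
      rw [mul_comm (k : ℕ) (j : ℕ)]
      ring
    rw [Finset.sum_congr rfl (fun k _ => this k), ← Finset.mul_sum, fourier_sum hn0 i j]
    by_cases hij : i = j
    · simp [hij, inv_mul_cancel₀ hnC]
    · simp [hij]
  have hFunit : IsUnit F := ⟨⟨F, G, hFG, mul_eq_one_comm.mp hFG⟩, rfl⟩
  have hFinv : F⁻¹ = G := by
    rw [Matrix.inv_eq_right_inv hFG]
  refine ⟨F * S, hFunit.mul hS, ‖lam - 1‖ * (n : ℝ)⁻¹, by positivity, ?_⟩
  have hM : (F * S) * A * (F * S)⁻¹ = F * D * G := by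
    rw [Matrix.mul_inv_rev, hFinv, ← hSA]
    noncomm_ring
  rw [hM]
  -- entry computation
  set m : Fin n := ⟨n - 1, by omega⟩ with hmdef
  have hentry : ∀ i j, (F * D * G) i j = (if i = j then 1 else 0) +
      (lam - 1) * (n : ℂ)⁻¹ * (ζ ^ ((i : ℕ) * (m : ℕ)) * (ζ ^ ((m : ℕ) * (j : ℕ)))⁻¹) := by
    intro i j
    rw [Matrix.mul_assoc, Matrix.mul_apply]
    have hterm : ∀ k : Fin n, F i k * (D * G) k j =
        (n : ℂ)⁻¹ * (ζ ^ ((i : ℕ) * (k : ℕ)) * (ζ ^ ((j : ℕ) * (k : ℕ)))⁻¹)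
        + (if k = m then (lam - 1) * (n : ℂ)⁻¹ *
            (ζ ^ ((i : ℕ) * (m : ℕ)) * (ζ ^ ((m : ℕ) * (j : ℕ)))⁻¹) else 0) := by
      intro k
      rw [hDdef, Matrix.diagonal_mul]
      by_cases hk : k = m
      · subst hk
        simp only [hFdef, hGdef, Matrix.of_apply, if_true, eq_self_iff_true]
        rw [mul_comm (j : ℕ) (m : ℕ)]
        rw [if_pos (show (m : ℕ) = n - 1 from rfl)]
        ring
      · have hkv : ¬ ((k : ℕ) = n - 1) := by
          intro h; exact hk (Fin.ext h)
        rw [if_neg hk, if_neg hkv]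
        simp only [hFdef, hGdef, Matrix.of_apply]
        rw [mul_comm (j : ℕ) (k : ℕ)]
        ring
    rw [Finset.sum_congr rfl (fun k _ => hterm k), Finset.sum_add_distrib,
      ← Finset.mul_sum, fourier_sum hn0 i j, Finset.sum_ite_eq' _ m, if_pos (Finset.mem_univ m)]
    by_cases hij : i = j
    · simp [hij, inv_mul_cancel₀ hnC]
    · simp [hij]
  intro i j
  rw [hentry i j]
  by_cases hij : i = j
  · subst hij
    rw [if_pos rfl, mul_comm ((m : ℕ)) ((i : ℕ)), mul_inv_cancel₀ (pow_ne_zero _ hζ0), mul_one]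
    have hrw : 1 + (lam - 1) * (n : ℂ)⁻¹ = ((n : ℂ) + lam - 1) * (n : ℂ)⁻¹ := by
      field_simp
      ring
    rw [hrw, norm_mul, norm_inv, Complex.norm_natCast]
    congr 1
    rw [Complex.norm_def, Complex.norm_def]
    congr 1
    simp only [Complex.normSq_apply, Complex.sub_re, Complex.add_re, Complex.natCast_re,
      Complex.one_re, Complex.sub_im, Complex.add_im, Complex.natCast_im, Complex.one_im]
    rw [hre]
    ring
  · rw [if_neg hij, zero_add, norm_mul, norm_mul, norm_inv,
      Complex.norm_natCast, norm_mul, norm_inv, hζabs, hζabs]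
    simp

set_option maxHeartbeats 1000000 in
open Matrix Complex in
private lemma similar_diag {m : ℕ} (B : Matrix (Fin (m + 1)) (Fin (m + 1)) ℂ)
    (hB : B.rank = 1) (ht : B.trace ≠ 0) :
    ∃ S : Matrix (Fin (m + 1)) (Fin (m + 1)) ℂ, IsUnit S ∧
      S * (1 + B) * S⁻¹ =
        Matrix.diagonal (fun i => if i = Fin.last m then 1 + B.trace else 1) := by
  obtain ⟨p, q, hpq⟩ := rank_one_decomp B hB
  set t : ℂ := B.trace with htdef
  have htr : t = ∑ i, p i * q i := by
    simp [htdef, Matrix.trace, Matrix.diag, hpq]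
  have hBp : B.mulVec p = t • p := by
    ext i
    simp only [Matrix.mulVec, dotProduct, hpq, Pi.smul_apply, smul_eq_mul, htr, Finset.sum_mul]
    exact Finset.sum_congr rfl fun j _ => by ring
  have hp0 : p ≠ 0 := by
    intro h
    apply ht
    rw [htr, h]
    simp
  -- kernel of B
  set K := LinearMap.ker B.mulVecLin with hKdef
  have hker : Module.finrank ℂ K = m := by
    rw [hKdef]
    have h1 := LinearMap.finrank_range_add_finrank_ker B.mulVecLin
    have h2 : Module.finrank ℂ (LinearMap.range B.mulVecLin) = 1 := hB
    rw [h2, Module.finrank_fintype_fun_eq_card] at h1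
    simp only [Fintype.card_fin] at h1
    omega
  set u : Module.Basis (Fin m) ℂ K := Module.finBasisOfFinrankEq ℂ K hker with hudef
  set w : Fin (m + 1) → (Fin (m + 1) → ℂ) := Fin.snoc (fun i => ((u i : K) : Fin (m + 1) → ℂ)) p
    with hwdef
  have hpK : p ∉ K := by
    intro hp
    have h0 : B.mulVec p = 0 := hp
    rw [hBp] at h0
    obtain ⟨i, hi⟩ := Function.ne_iff.mp hp0
    have h1 := congrFun h0 i
    simp only [Pi.smul_apply, smul_eq_mul, Pi.zero_apply] at h1
    exact hi (by
      rcases mul_eq_zero.mp h1 with h | h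
      · exact absurd h ht
      · exact h)
  have hspan : Submodule.span ℂ (Set.range fun i => ((u i : K) : Fin (m + 1) → ℂ)) = K := by
    have hr : (Set.range fun i => ((u i : K) : Fin (m + 1) → ℂ)) = K.subtype '' Set.range u := by
      rw [← Set.range_comp]; rfl
    rw [hr, Submodule.span_image, u.span_eq, Submodule.map_subtype_top]
  have hli : LinearIndependent ℂ w := by
    rw [hwdef, linearIndependent_fin_snoc]
    refine ⟨u.linearIndependent.map' K.subtype K.ker_subtype, ?_⟩
    rw [hspan]
    exact hpK
  have hcard : Fintype.card (Fin (m + 1)) = Module.finrank ℂ (Fin (m + 1) → ℂ) := by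
    simp [Module.finrank_fintype_fun_eq_card]
  set b : Module.Basis (Fin (m + 1)) ℂ (Fin (m + 1) → ℂ) :=
    basisOfLinearIndependentOfCardEqFinrank hli hcard with hbdef
  have hb : ⇑b = w := coe_basisOfLinearIndependentOfCardEqFinrank hli hcard
  set c : Module.Basis (Fin (m + 1)) ℂ (Fin (m + 1) → ℂ) := Pi.basisFun ℂ (Fin (m + 1)) with hcdef
  set f : (Fin (m + 1) → ℂ) →ₗ[ℂ] (Fin (m + 1) → ℂ) := Matrix.toLin c c (1 + B) with hfdef
  have hfapp : ∀ v, f v = (1 + B).mulVec v := by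
    intro v
    rw [hfdef, hcdef, Matrix.toLin_eq_toLin', Matrix.toLin'_apply]
  set d : Fin (m + 1) → ℂ := fun i => if i = Fin.last m then 1 + t else 1 with hddef
  have hf : ∀ i, f (b i) = d i • b i := by
    intro i
    rw [hb]
    induction i using Fin.lastCases with
    | last =>
      rw [hfapp]
      simp only [hwdef, Fin.snoc_last, hddef, if_pos rfl]
      rw [Matrix.add_mulVec, Matrix.one_mulVec, hBp]
      ext k
      simp
      ring
    | cast i =>
      rw [hfapp]
      have hmem : ((u i : K) : Fin (m + 1) → ℂ) ∈ K := (u i).2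
      have hker0 : B.mulVec ((u i : K) : Fin (m + 1) → ℂ) = 0 := hmem
      simp only [hwdef, Fin.snoc_castSucc, hddef]
      rw [Matrix.add_mulVec, Matrix.one_mulVec, hker0, if_neg (Fin.castSucc_lt_last i).ne]
      simp
  have htm : LinearMap.toMatrix b b f = Matrix.diagonal d := by
    ext i j
    rw [LinearMap.toMatrix_apply, hf j, _root_.map_smul, b.repr_self]
    by_cases hij : i = j
    · subst hij
      simp [Matrix.diagonal_apply_eq]
    · rw [Matrix.diagonal_apply_ne _ hij]
      simp only [Finsupp.smul_single, smul_eq_mul, mul_one, Finsupp.single_apply]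
      rw [if_neg (fun h => hij h.symm)]
  set P := LinearMap.toMatrix c b LinearMap.id with hPdef
  set Q := LinearMap.toMatrix b c LinearMap.id with hQdef
  have hPQ : P * Q = 1 := by
    rw [hPdef, hQdef, ← LinearMap.toMatrix_comp b c b, LinearMap.id_comp, LinearMap.toMatrix_id]
  have hQP : Q * P = 1 := by
    rw [hPdef, hQdef, ← LinearMap.toMatrix_comp c b c, LinearMap.id_comp, LinearMap.toMatrix_id]
  refine ⟨P, ⟨⟨P, Q, hPQ, hQP⟩, rfl⟩, ?_⟩
  have hPinv : P⁻¹ = Q := Matrix.inv_eq_right_inv hPQ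
  have hA : LinearMap.toMatrix c c f = 1 + B := LinearMap.toMatrix_toLin c c (1 + B)
  rw [hPinv, ← hA, hPdef, hQdef, ← LinearMap.toMatrix_comp c c b LinearMap.id f,
    ← LinearMap.toMatrix_comp b c b (LinearMap.id.comp f) LinearMap.id, LinearMap.comp_id,
    LinearMap.id_comp, htm]

open Matrix Complex in
private lemma three_distinct {n : ℕ} (hn : 3 ≤ n) (i : Fin n) :
    ∃ j k : Fin n, i ≠ j ∧ i ≠ k ∧ j ≠ k := by
  have h0 : 0 < n := by omega
  have h1 : 1 < n := by omega
  have h2 : 2 < n := by omega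
  set a : Fin n := ⟨0, h0⟩
  set b : Fin n := ⟨1, h1⟩
  set c : Fin n := ⟨2, h2⟩
  have hab : a ≠ b := by simp [Fin.ext_iff]
  have hac : a ≠ c := by simp [Fin.ext_iff]
  have hbc : b ≠ c := by simp [b, c, Fin.ext_iff]
  by_cases hia : i = a
  · exact ⟨b, c, hia ▸ hab, hia ▸ hac, hbc⟩
  · by_cases hib : i = b
    · exact ⟨a, c, fun h => hia (h ▸ (hib ▸ rfl)) , hib ▸ hbc, hac⟩
    · exact ⟨a, b, hia, hib, hab⟩

open Matrix Complex in
private lemma forward_trace {n : ℕ} (hn : 3 ≤ n) (A B : Matrix (Fin n) (Fin n) ℂ)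
    (hB : B.rank = 1) (hAB : A = 1 + B) (h : IsApportionable A) :
    B.trace.re = -((n : ℝ) / 2) := by
  obtain ⟨M, hM, κ, hκ0, hκ⟩ := h
  have hMdet := (Matrix.isUnit_iff_isUnit_det M).mp hM
  have hMM : M * M⁻¹ = 1 := Matrix.mul_nonsing_inv _ hMdet
  set B' := M * B * M⁻¹ with hB'def
  have hU : M * A * M⁻¹ = 1 + B' := by
    rw [hAB, Matrix.mul_add, Matrix.mul_one, Matrix.add_mul, hMM, hB'def, Matrix.mul_assoc]
  rw [hU] at hκ
  have hrank : B'.rank = 1 := by rw [hB'def, rank_conj M B hM, hB]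
  obtain ⟨x, y, hxy⟩ := rank_one_decomp B' hrank
  have hκpos : 0 < κ := by
    rcases lt_or_eq_of_le hκ0 with h | h
    · exact h
    · exfalso
      have hB'neg : B' = -1 := by
        ext i j
        have := hκ i j
        rw [← h] at this
        have h0 : (1 + B') i j = 0 := by
          have := norm_eq_zero.mp this
          exact this
        have : B' i j = -(1 : Matrix (Fin n) (Fin n) ℂ) i j := by
          have h1 : (1 : Matrix (Fin n) (Fin n) ℂ) i j + B' i j = 0 := h0
          linear_combination h1
        simpa using this
      have hunit : IsUnit (-1 : Matrix (Fin n) (Fin n) ℂ) := isUnit_one.neg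
      have := Matrix.rank_of_isUnit _ hunit
      rw [← hB'neg, hrank, Fintype.card_fin] at this
      omega
  have hoff : ∀ i j, i ≠ j → ‖x i * y j‖ = κ := by
    intro i j hij
    have := hκ i j
    rwa [Matrix.add_apply, Matrix.one_apply_ne hij, zero_add, hxy] at this
  have hdiag : ∀ i, ‖1 + x i * y i‖ = κ := by
    intro i
    have := hκ i i
    rwa [Matrix.add_apply, Matrix.one_apply_eq, hxy] at this
  have habsz : ∀ i, ‖x i * y i‖ = κ := by
    intro i
    obtain ⟨j, k, hij, hik, hjk⟩ := three_distinct hn i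
    have he : (x i * y i) * (x k * y j) = (x i * y j) * (x k * y i) := by ring
    have key : ‖x i * y i‖ * ‖x k * y j‖ =
        ‖x i * y j‖ * ‖x k * y i‖ := by
      rw [← norm_mul, ← norm_mul, he]
    rw [hoff i j hij, hoff k j (Ne.symm hjk), hoff k i (Ne.symm hik)] at key
    have hκκ : ‖x i * y i‖ * κ = κ * κ := key
    have := mul_right_cancel₀ (ne_of_gt hκpos) hκκ
    linarith
  have hrez : ∀ i, (x i * y i).re = -(1 / 2 : ℝ) := by
    intro i
    have h1 : ‖1 + x i * y i‖ = ‖x i * y i‖ := by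
      rw [hdiag i, habsz i]
    have h2 : Complex.normSq (1 + x i * y i) = Complex.normSq (x i * y i) := by
      rw [← Complex.sq_norm, ← Complex.sq_norm, h1]
    rw [Complex.normSq_add] at h2
    simp only [Complex.normSq_one, one_mul] at h2
    have : ((starRingEnd ℂ) (x i * y i)).re = (x i * y i).re := Complex.conj_re _
    rw [this] at h2
    linarith
  have htr : B.trace = B'.trace := (trace_conj M B hM).symm
  have : B'.trace = ∑ i, x i * y i := by
    simp [Matrix.trace, Matrix.diag, hxy]
  rw [htr, this, Complex.re_sum]
  rw [Finset.sum_congr rfl (fun i _ => hrez i)]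
  simp
  ring

/-- Let `n ≥ 3` and let `A` be a rank one perturbation of the identity. Then
`A` is apportionable iff `A` is similar to `diag(1, …, 1, λ)` for some `λ`
with `Re λ = 1 - n/2`. -/
theorem rank_one_perturbation_apportionable_iff {n : ℕ} (hn : 3 ≤ n)
    (A B : Matrix (Fin n) (Fin n) ℂ) (hB : B.rank = 1) (hAB : A = 1 + B) :
    IsApportionable A ↔
      ∃ lam : ℂ, lam.re = 1 - (n : ℝ) / 2 ∧
        ∃ S : Matrix (Fin n) (Fin n) ℂ, IsUnit S ∧
          S * A * S⁻¹ =
            Matrix.diagonal (fun i : Fin n => if (i : ℕ) = n - 1 then lam else 1) := by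
  constructor
  · intro h
    have hre := forward_trace hn A B hB hAB h
    have ht : B.trace ≠ 0 := by
      intro h0
      rw [h0] at hre
      simp only [Complex.zero_re] at hre
      have h3 : (3 : ℝ) ≤ (n : ℝ) := by exact_mod_cast hn
      linarith
    obtain ⟨m, rfl⟩ : ∃ m, n = m + 1 := ⟨n - 1, by omega⟩
    obtain ⟨S, hS, hSA⟩ := similar_diag B hB ht
    refine ⟨1 + B.trace, ?_, S, hS, ?_⟩
    · rw [Complex.add_re, Complex.one_re, hre]
      ring
    · have hfun : (fun i : Fin (m + 1) => if (i : ℕ) = m + 1 - 1 then 1 + B.trace else 1)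
          = (fun i : Fin (m + 1) => if i = Fin.last m then 1 + B.trace else 1) := by
        funext i
        by_cases hi : i = Fin.last m
        · rw [if_pos hi, if_pos (by rw [hi]; simp)]
        · rw [if_neg hi, if_neg (fun hv => hi (Fin.ext (by simpa using hv)))]
      rw [hAB, hSA, hfun]
  · rintro ⟨lam, hre, S, hS, hSA⟩
    exact backward hn A lam hre S hS hSA
end

section
/- Let n ≥ 3, let λ ∈ ℂ with Re(λ) = 1 − n/2, and let A = diag(1, …, 1, λ) ∈ ℂ^{n×n} (the block diagonal matrix I_{n−1} ⊕ [λ]). Then the set K(A) of apportionment constants of A equals [1/2, ∞) if n is even and Im(λ) = 0, and otherwise K(A) equals the finite set { √( Im(λ)² / (n − 2s)² + 1/4 ) : s = 0, 1, …, ⌊(n−1)/2⌋ }. -/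
section helpers

lemma entryFormula {n : ℕ} (lam : ℂ) (M N : Matrix (Fin n) (Fin n) ℂ)
    (hMN : M * N = 1) (L : Fin n) (hL : (L : ℕ) = n - 1) (i j : Fin n) :
    (M * Matrix.diagonal (fun k : Fin n => if (k : ℕ) = n - 1 then lam else 1) * N) i j
      = (if i = j then (1 : ℂ) else 0)
        + (lam - 1) * (M i L * N L j) := by
  have hd : (fun k : Fin n => if (k : ℕ) = n - 1 then lam else 1)
      = fun k => if k = L then lam else 1 := by
    funext k
    have : (k : ℕ) = n - 1 ↔ k = L := by rw [Fin.ext_iff, hL]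
    simp [this]
  rw [hd, Matrix.mul_assoc, Matrix.mul_apply]
  have he : ∀ k, M i k * (Matrix.diagonal (fun k => if k = L then lam else 1) * N) k j
      = M i k * N k j + (if k = L then (lam - 1) * (M i k * N k j) else 0) := by
    intro k
    rw [Matrix.diagonal_mul]
    by_cases hk : k = L <;> simp [hk] <;> ring
  rw [Finset.sum_congr rfl (fun k _ => he k), Finset.sum_add_distrib,
    Finset.sum_ite_eq' _ L]
  have h1' : ∑ k, M i k * N k j = (M * N) i j := (Matrix.mul_apply).symm
  rw [h1', hMN, Matrix.one_apply]
  simp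

lemma sum_signs (n s : ℕ) (hs : s ≤ n) (t : ℝ) :
    ∑ i : Fin n, (if (i : ℕ) < s then -t else t) = ((n : ℝ) - 2 * s) * t := by
  rw [Fin.sum_univ_eq_sum_range (fun i => if i < s then -t else t) n,
    ← Finset.sum_range_add_sum_Ico _ hs,
    Finset.sum_congr rfl (fun i hi => if_pos (Finset.mem_range.mp hi)),
    Finset.sum_congr rfl (fun i hi => if_neg (by
      have := (Finset.mem_Ico.mp hi).1; omega))]
  simp only [Finset.sum_const, Finset.card_range, Nat.card_Ico, nsmul_eq_mul]
  rw [Nat.cast_sub hs]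
  ring

lemma abs_half_mk (c : ℝ) : ‖(⟨-(1/2), c⟩ : ℂ)‖ = Real.sqrt (c ^ 2 + 1 / 4)
    ∧ ‖1 + (⟨-(1/2), c⟩ : ℂ)‖ = Real.sqrt (c ^ 2 + 1 / 4) := by
  constructor
  · rw [Complex.norm_def, Complex.normSq_mk]
    norm_num; ring_nf
  · have : (1 : ℂ) + ⟨-(1/2), c⟩ = ⟨1/2, c⟩ := by
      apply Complex.ext <;> simp <;> norm_num
    rw [this, Complex.norm_def, Complex.normSq_mk]
    norm_num
    ring_nf

lemma sum_pm {n : ℕ} (t : ℝ) (e : Fin n → ℝ) (he : ∀ i, e i = t ∨ e i = -t) :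
    ∃ p : ℕ, p ≤ n ∧ ∑ i, e i = (2 * (p : ℝ) - n) * t := by
  classical
  set P := Finset.univ.filter (fun i : Fin n => e i = t) with hP
  have hPle : P.card ≤ n := le_trans (Finset.card_filter_le _ _) (by simp)
  refine ⟨P.card, hPle, ?_⟩
  have hcard : (Finset.univ.filter (fun i : Fin n => ¬ e i = t)).card = n - P.card := by
    have := Finset.card_filter_add_card_filter_not (s := (Finset.univ : Finset (Fin n)))
      (p := fun i : Fin n => e i = t)
    simp only [Finset.card_univ, Fintype.card_fin, ← hP] at this
    omega
  rw [← Finset.sum_filter_add_sum_filter_not Finset.univ (fun i : Fin n => e i = t)]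
  have hgood : ∑ i ∈ Finset.univ.filter (fun i : Fin n => e i = t), e i = P.card * t := by
    rw [Finset.sum_congr rfl (fun i hi => (Finset.mem_filter.mp hi).2),
      Finset.sum_const, ← hP, nsmul_eq_mul]
  have hbad : ∑ i ∈ Finset.univ.filter (fun i : Fin n => ¬ e i = t), e i
      = -((n : ℝ) - P.card) * t := by
    rw [Finset.sum_congr rfl (fun i hi => by
        rcases he i with h' | h'
        · exact absurd h' (Finset.mem_filter.mp hi).2
        · exact h'),
      Finset.sum_const, hcard, nsmul_eq_mul, Nat.cast_sub hPle]
    ring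
  rw [hgood, hbad]
  ring

set_option maxHeartbeats 2000000 in
lemma forward {n : ℕ} (hn : 3 ≤ n) (lam : ℂ) (hlam : lam.re = 1 - (n : ℝ) / 2) (κ : ℝ)
    (h : IsApportionmentConstant
      (Matrix.diagonal (fun i : Fin n => if (i : ℕ) = n - 1 then lam else 1)) κ) :
    ∃ p : ℕ, p ≤ n ∧ 1 / 2 ≤ κ ∧
      lam.im = (2 * (p : ℝ) - n) * Real.sqrt (κ ^ 2 - 1 / 4) := by
  classical
  obtain ⟨hκ0, M, hM, hBabs⟩ := h
  have hdet := (Matrix.isUnit_iff_isUnit_det M).mp hM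
  have hMN : M * M⁻¹ = 1 := Matrix.mul_nonsing_inv M hdet
  have hNM : M⁻¹ * M = 1 := Matrix.nonsing_inv_mul M hdet
  set L : Fin n := ⟨n - 1, by omega⟩ with hLdef
  obtain ⟨u, hu⟩ : ∃ u : Fin n → ℂ, u = fun i => M i L := ⟨_, rfl⟩
  obtain ⟨v, hv⟩ : ∃ v : Fin n → ℂ, v = fun j => M⁻¹ L j := ⟨_, rfl⟩
  have hB : ∀ i j,
      (M * Matrix.diagonal (fun i : Fin n => if (i : ℕ) = n - 1 then lam else 1) * M⁻¹) i j
        = (if i = j then (1 : ℂ) else 0) + (lam - 1) * (u i * v j) := by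
    intro i j
    rw [hu, hv]
    exact entryFormula lam M M⁻¹ hMN L (by simp [hLdef]) i j
  obtain ⟨z, hz⟩ : ∃ z : Fin n → ℂ, z = fun i => (lam - 1) * (u i * v i) := ⟨_, rfl⟩
  have hzi : ∀ i, z i = (lam - 1) * (u i * v i) := fun i => by rw [hz]
  have hdiag : ∀ i, ‖1 + z i‖ = κ := by
    intro i
    have := hBabs i i
    rw [hB i i, if_pos rfl, ← hzi i] at this
    exact this
  have hoff : ∀ i j, i ≠ j → ‖(lam - 1) * (u i * v j)‖ = κ := by
    intro i j hij
    have := hBabs i j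
    rw [hB i j, if_neg hij, zero_add] at this
    exact this
  have hsum : ∑ i, z i = lam - 1 := by
    have huv : ∑ i, v i * u i = 1 := by
      have h0 : (M⁻¹ * M) L L = 1 := by rw [hNM]; simp [Matrix.one_apply]
      rw [Matrix.mul_apply] at h0
      rw [hu, hv]
      exact h0
    rw [hz]
    calc ∑ i, (lam - 1) * (u i * v i) = (lam - 1) * ∑ i, v i * u i := by
          rw [Finset.mul_sum]; exact Finset.sum_congr rfl fun i _ => by ring
      _ = lam - 1 := by rw [huv, mul_one]
  have hn3 : (3 : ℝ) ≤ (n : ℝ) := by exact_mod_cast hn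
  have hκpos : 0 < κ := by
    rcases hκ0.lt_or_eq with h' | h'
    · exact h'
    · exfalso
      have hz1 : ∀ i, z i = -1 := by
        intro i
        have := hdiag i
        rw [← h'] at this
        have h0 : (1 : ℂ) + z i = 0 := by
          exact norm_eq_zero.mp this
        linear_combination h0
      have : ∑ i, z i = -(n : ℂ) := by
        rw [Finset.sum_congr rfl (fun i _ => hz1 i)]
        simp
      rw [hsum] at this
      have hre := congrArg Complex.re this
      simp [hlam] at hre
      linarith
  have habsz : ∀ i, ‖z i‖ = κ := by
    intro i
    obtain ⟨k, j, hki, hji, hjk⟩ : ∃ k j : Fin n, k ≠ i ∧ j ≠ i ∧ j ≠ k := by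
      have h0 : (0 : ℕ) < n := by omega
      have h1 : (1 : ℕ) < n := by omega
      have h2 : (2 : ℕ) < n := by omega
      by_cases hA : i = ⟨0, h0⟩
      · exact ⟨⟨1, h1⟩, ⟨2, h2⟩, by simp [hA, Fin.ext_iff], by simp [hA, Fin.ext_iff],
          by simp [Fin.ext_iff]⟩
      · by_cases hB' : i = ⟨1, h1⟩
        · exact ⟨⟨0, h0⟩, ⟨2, h2⟩, by simp [hB', Fin.ext_iff], by simp [hB', Fin.ext_iff],
            by simp [Fin.ext_iff]⟩
        · exact ⟨⟨0, h0⟩, ⟨1, h1⟩, fun hh => hA hh.symm, fun hh => hB' hh.symm,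
            by simp [Fin.ext_iff]⟩
    have e1 : ‖lam - 1‖ * ‖u j‖ * ‖v i‖ = κ := by
      have := hoff j i hji; rw [norm_mul, norm_mul] at this; linarith [this]
    have e2 : ‖lam - 1‖ * ‖u j‖ * ‖v k‖ = κ := by
      have := hoff j k hjk; rw [norm_mul, norm_mul] at this; linarith [this]
    have e3 : ‖lam - 1‖ * ‖u i‖ * ‖v k‖ = κ := by
      have := hoff i k (fun hh => hki hh.symm); rw [norm_mul, norm_mul] at this; linarith [this]
    have hvv : ‖v i‖ = ‖v k‖ := by
      have hne : ‖lam - 1‖ * ‖u j‖ ≠ 0 := by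
        intro hh
        rw [hh, zero_mul] at e1
        exact hκpos.ne e1
      exact mul_left_cancel₀ hne (by linarith [e1, e2])
    rw [hzi i, norm_mul, norm_mul, hvv]
    linarith [e3]
  have hrim : ∀ i, (z i).re = -(1/2) ∧ ((z i).im) ^ 2 = κ ^ 2 - 1 / 4 := by
    intro i
    have ha := habsz i
    have hb := hdiag i
    have ha2 : (z i).re ^ 2 + (z i).im ^ 2 = κ ^ 2 := by
      have := congrArg (· ^ 2) ha
      simp only [Complex.sq_norm, Complex.normSq_apply] at this
      nlinarith [this]
    have hb2 : (1 + (z i).re) ^ 2 + (z i).im ^ 2 = κ ^ 2 := by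
      have := congrArg (· ^ 2) hb
      simp only [Complex.sq_norm, Complex.normSq_apply, Complex.add_re, Complex.add_im,
        Complex.one_re, Complex.one_im] at this
      nlinarith [this]
    constructor
    · nlinarith [ha2, hb2]
    · nlinarith [ha2, hb2]
  have hκhalf : 1 / 2 ≤ κ := by
    have := (hrim ⟨0, by omega⟩).2
    nlinarith [sq_nonneg ((z ⟨0, by omega⟩).im), hκpos]
  set t : ℝ := Real.sqrt (κ ^ 2 - 1 / 4) with htdef
  have ht2 : t ^ 2 = κ ^ 2 - 1 / 4 := Real.sq_sqrt (by nlinarith)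
  have ht0 : 0 ≤ t := Real.sqrt_nonneg _
  have him : ∀ i, (z i).im = t ∨ (z i).im = -t := by
    intro i
    have : ((z i).im - t) * ((z i).im + t) = 0 := by nlinarith [(hrim i).2, ht2]
    rcases mul_eq_zero.mp this with h' | h'
    · left; linarith
    · right; linarith
  obtain ⟨p, hp, hsum'⟩ := sum_pm t (fun i => (z i).im) him
  refine ⟨p, hp, hκhalf, ?_⟩
  have himsum : lam.im = ∑ i, (z i).im := by
    have := congrArg Complex.im hsum
    rw [Complex.im_sum] at this
    simpa using this.symm
  rw [himsum, hsum']

end helpers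

open Finset

section
variable {n : ℕ}

lemma construct {n : ℕ} (hn : 3 ≤ n) (lam : ℂ) (κ : ℝ) (hκ : κ ≠ 0)
    (hμ : lam - 1 ≠ 0) (z : Fin n → ℂ)
    (h1 : ∀ i, ‖z i‖ = κ) (h2 : ∀ i, ‖1 + z i‖ = κ)
    (h3 : ∑ i, z i = lam - 1) (hκ0 : 0 ≤ κ) :
    IsApportionmentConstant
      (Matrix.diagonal (fun i : Fin n => if (i : ℕ) = n - 1 then lam else 1)) κ := by
  have hn0 : 0 < n := by omega
  set L : Fin n := ⟨n - 1, by omega⟩ with hLdef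
  set w : Fin n → ℂ := fun i => z i / (lam - 1) with hw
  have hwsum : ∑ i, w i = 1 := by
    rw [hw, ← Finset.sum_div, h3, div_self hμ]
  have hzL : z L ≠ 0 := fun h => hκ (by rw [← h1 L, h, norm_zero])
  have hwL : w L ≠ 0 := div_ne_zero hzL hμ
  set M : Matrix (Fin n) (Fin n) ℂ := Matrix.of (fun i j =>
    if j = L then 1 else if i = L then -(w j / w L) else if i = j then 1 else 0) with hM
  set N : Matrix (Fin n) (Fin n) ℂ := Matrix.of (fun i j =>
    if i = L then w j else (if i = j then (1 : ℂ) else 0) - w j) with hN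
  have hwsum' : ∑ k ∈ Finset.univ.erase L, w k = 1 - w L := by
    have := Finset.sum_erase_add Finset.univ w (Finset.mem_univ L)
    rw [hwsum] at this; linear_combination this
  have hMN : M * N = 1 := by
    ext i j
    rw [Matrix.mul_apply, Matrix.one_apply,
      ← Finset.sum_erase_add _ _ (Finset.mem_univ L)]
    by_cases hi : i = L
    · subst hi
      have he : ∀ k ∈ Finset.univ.erase L,
          M L k * N k j = (if k = j then -(w k / w L) else 0) + w k / w L * w j := by
        intro k hk
        have hk' : k ≠ L := Finset.ne_of_mem_erase hk
        simp only [hM, hN, Matrix.of_apply, if_neg hk', if_pos rfl]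
        by_cases hkj : k = j <;> simp [hkj] <;> ring
      rw [Finset.sum_congr rfl he, Finset.sum_add_distrib, Finset.sum_ite_eq' _ j,
        show ∑ x ∈ Finset.univ.erase L, w x / w L * w j = (1 - w L) / w L * w j from by
          rw [← Finset.sum_mul, ← Finset.sum_div, hwsum']]
      have hMLL : M L L = 1 := by simp [hM]
      have hNLj : N L j = w j := by simp [hN]
      rw [hMLL, hNLj]
      by_cases hj : j = L
      · subst hj
        simp only [Finset.mem_erase, ne_eq, not_true_eq_false, false_and, if_neg,
          if_pos rfl, if_false, if_true]
        field_simp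
        ring
      · rw [if_neg (fun h : L = j => hj h.symm)]
        simp only [Finset.mem_erase, Finset.mem_univ, and_true, if_pos hj]
        field_simp
        ring
    · have he : ∀ k ∈ Finset.univ.erase L,
          M i k * N k j = if i = k then (if k = j then (1:ℂ) else 0) - w j else 0 := by
        intro k hk
        have hk' : k ≠ L := Finset.ne_of_mem_erase hk
        simp only [hM, hN, Matrix.of_apply, if_neg hk', if_neg hi]
        by_cases hik : i = k <;> simp [hik]
      rw [Finset.sum_congr rfl he]
      have : ∑ k ∈ Finset.univ.erase L,
          (if i = k then (if k = j then (1:ℂ) else 0) - w j else 0)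
          = (if i = j then (1:ℂ) else 0) - w j := by
        rw [Finset.sum_ite_eq]
        simp [Finset.mem_erase, hi]
      rw [this]
      have hMiL : M i L = 1 := by simp [hM]
      have hNLj : N L j = w j := by simp [hN]
      rw [hMiL, hNLj]
      ring
  have hB : ∀ i j, (M * Matrix.diagonal (fun i : Fin n => if (i : ℕ) = n - 1 then lam else 1) * N) i j
      = (if i = j then (1:ℂ) else 0) + z j := by
    intro i j
    have hd : (fun i : Fin n => if (i : ℕ) = n - 1 then lam else 1)
        = fun k => if k = L then lam else 1 := by
      funext k
      simp [hLdef, Fin.ext_iff]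
    rw [hd, Matrix.mul_assoc, Matrix.mul_apply]
    have he : ∀ k, M i k * (Matrix.diagonal (fun k => if k = L then lam else 1) * N) k j
        = M i k * N k j + (if k = L then (lam - 1) * (M i k * N k j) else 0) := by
      intro k
      rw [Matrix.diagonal_mul]
      by_cases hk : k = L <;> simp [hk] <;> ring
    rw [Finset.sum_congr rfl (fun k _ => he k), Finset.sum_add_distrib,
      Finset.sum_ite_eq' _ L]
    have h1' : ∑ k, M i k * N k j = (M * N) i j := (Matrix.mul_apply).symm
    rw [h1', hMN, Matrix.one_apply]
    have hMiL : M i L = 1 := by simp [hM]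
    have hNLj : N L j = w j := by simp [hN]
    simp only [Finset.mem_univ, if_pos, hMiL, hNLj]
    have : (lam - 1) * (1 * w j) = z j := by
      rw [hw]; field_simp
    rw [this]
  refine ⟨hκ0, M, (Matrix.isUnit_iff_isUnit_det M).mpr (Matrix.isUnit_det_of_right_inverse hMN), ?_⟩
  intro i j
  rw [Matrix.inv_eq_right_inv hMN, hB i j]
  by_cases hij : i = j
  · subst hij; rw [if_pos rfl]; exact h2 i
  · rw [if_neg hij, zero_add]; exact h1 j

end

/-- For `n ≥ 3` and `λ` with `Re λ = 1 - n/2`, the set of apportionment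
constants of `A = diag(1, …, 1, λ)` is `[1/2, ∞)` if `n` is even and
`Im λ = 0`, and otherwise it is the finite set
`{ √(Im(λ)²/(n - 2s)² + 1/4) : s = 0, …, ⌊(n-1)/2⌋ }`. -/
theorem apportionmentConstants_id_oplus_lambda {n : ℕ} (hn : 3 ≤ n) (lam : ℂ)
    (hlam : lam.re = 1 - (n : ℝ) / 2) :
    ((Even n ∧ lam.im = 0) →
      apportionmentConstants
          (Matrix.diagonal (fun i : Fin n => if (i : ℕ) = n - 1 then lam else 1)) =
        Set.Ici (1 / 2 : ℝ)) ∧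
    (¬ (Even n ∧ lam.im = 0) →
      apportionmentConstants
          (Matrix.diagonal (fun i : Fin n => if (i : ℕ) = n - 1 then lam else 1)) =
        {κ : ℝ | ∃ s : ℕ, s ≤ (n - 1) / 2 ∧
          κ = Real.sqrt (lam.im ^ 2 / ((n : ℝ) - 2 * s) ^ 2 + 1 / 4)}) := by
  classical
  have hnR : (3 : ℝ) ≤ (n : ℝ) := by exact_mod_cast hn
  have hμ : lam - 1 ≠ 0 := by
    intro h
    have := congrArg Complex.re h
    simp only [Complex.sub_re, Complex.one_re, Complex.zero_re, hlam] at this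
    linarith
  have hsqrt14 : Real.sqrt (1 / 4) = 1 / 2 := by
    rw [show (1 / 4 : ℝ) = (1 / 2) ^ 2 by norm_num, Real.sqrt_sq (by norm_num)]
  constructor
  · rintro ⟨hev, him0⟩
    obtain ⟨m, hm⟩ := hev
    ext κ
    simp only [apportionmentConstants, Set.mem_setOf_eq, Set.mem_Ici]
    constructor
    · intro h
      obtain ⟨p, _, h2, _⟩ := forward hn lam hlam κ h
      linarith
    · intro hκh
      have hmn : m ≤ n := by omega
      set t : ℝ := Real.sqrt (κ ^ 2 - 1 / 4) with htdef
      have ht2 : t ^ 2 = κ ^ 2 - 1 / 4 := Real.sq_sqrt (by nlinarith)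
      have habs : ∀ c : ℝ, c ^ 2 = t ^ 2 → Real.sqrt (c ^ 2 + 1 / 4) = κ := by
        intro c hc
        rw [hc, ht2, show κ ^ 2 - 1 / 4 + 1 / 4 = κ ^ 2 by ring,
          Real.sqrt_sq (by linarith)]
      have hc2 : ∀ i : Fin n, (if (i : ℕ) < m then -t else t) ^ 2 = t ^ 2 := by
        intro i; by_cases h' : (i : ℕ) < m <;> simp [h']
      refine construct hn lam κ (by linarith) hμ
        (fun i => ⟨-(1/2), if (i : ℕ) < m then -t else t⟩) ?_ ?_ ?_ (by linarith)
      · intro i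
        rw [(abs_half_mk _).1, habs _ (hc2 i)]
      · intro i
        rw [(abs_half_mk _).2, habs _ (hc2 i)]
      · apply Complex.ext
        · rw [Complex.re_sum]
          simp only [Complex.sub_re, Complex.one_re, hlam]
          rw [Finset.sum_const, Finset.card_univ, Fintype.card_fin, nsmul_eq_mul]
          ring
        · rw [Complex.im_sum]
          simp only [Complex.sub_im, Complex.one_im, him0]
          have := sum_signs n m hmn t
          rw [this]
          have : (n : ℝ) = 2 * m := by rw [hm]; push_cast; ring
          rw [this]
          ring
  · intro hodd
    ext κ
    simp only [apportionmentConstants, Set.mem_setOf_eq]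
    constructor
    · intro h
      obtain ⟨p, hpn, hκh, him⟩ := forward hn lam hlam κ h
      set t : ℝ := Real.sqrt (κ ^ 2 - 1 / 4) with htdef
      have ht2 : t ^ 2 = κ ^ 2 - 1 / 4 := Real.sq_sqrt (by nlinarith)
      have ht0 : 0 ≤ t := Real.sqrt_nonneg _
      by_cases himt : lam.im = 0
      · have hnodd : ¬ Even n := fun he => hodd ⟨he, himt⟩
        have h2pn : (2 * (p : ℝ) - n) ≠ 0 := by
          intro h0
          have h1 : (2 * p : ℝ) = (n : ℝ) := by linarith
          have : 2 * p = n := by exact_mod_cast h1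
          exact hnodd ⟨p, by omega⟩
        have htz : t = 0 := by
          have : (2 * (p : ℝ) - n) * t = 0 := by rw [← him, himt]
          rcases mul_eq_zero.mp this with h' | h'
          · exact absurd h' h2pn
          · exact h'
        have hκ12 : κ = 1 / 2 := by nlinarith [ht2, htz]
        refine ⟨0, by omega, ?_⟩
        rw [himt, hκ12]
        norm_num [hsqrt14]
      · have htz : t ≠ 0 := by
          intro h0; rw [h0, mul_zero] at him; exact himt him
        have h2pn : 2 * p ≠ n := by
          intro h0
          rw [show (2 * (p : ℝ) - n) = 0 from by
            rw [← h0]; push_cast; ring, zero_mul] at him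
          exact himt him
        have h2pnR : (2 * (p : ℝ) - n) ≠ 0 := by
          intro h0
          have h1 : (2 * p : ℝ) = (n : ℝ) := by linarith
          exact h2pn (by exact_mod_cast h1)
        have hsle : (if 2 * p ≤ n then p else n - p) ≤ (n - 1) / 2 := by
          by_cases h' : 2 * p ≤ n <;> simp only [h', if_true, if_false] <;> omega
        refine ⟨if 2 * p ≤ n then p else n - p, hsle, ?_⟩
        have hsq : ((n : ℝ) - 2 * ((if 2 * p ≤ n then p else n - p) : ℕ)) ^ 2
            = (2 * (p : ℝ) - n) ^ 2 := by
          by_cases h' : 2 * p ≤ n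
          · simp only [h', if_true]; ring
          · simp only [h', if_false]
            rw [Nat.cast_sub hpn]
            ring
        have hcanc : ((2 * (p : ℝ) - n) * t) ^ 2 / (2 * (p : ℝ) - n) ^ 2 = t ^ 2 := by
          rw [mul_pow]
          field_simp
        rw [him, hsq, hcanc, ht2,
          show κ ^ 2 - 1 / 4 + 1 / 4 = κ ^ 2 by ring,
          Real.sqrt_sq (by linarith)]
    · rintro ⟨s, hs, hκeq⟩
      have hns : 2 * s + 1 ≤ n := by omega
      have hnsR : (1 : ℝ) ≤ (n : ℝ) - 2 * s := by
        have : ((2 * s + 1 : ℕ) : ℝ) ≤ (n : ℝ) := by exact_mod_cast hns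
        push_cast at this
        linarith
      set t : ℝ := lam.im / ((n : ℝ) - 2 * s) with htdef
      have ht2 : t ^ 2 = lam.im ^ 2 / ((n : ℝ) - 2 * s) ^ 2 := by
        rw [htdef, div_pow]
      have hκt : κ = Real.sqrt (t ^ 2 + 1 / 4) := by rw [hκeq, ht2]
      have hκpos : 0 < κ := by
        rw [hκt]; exact Real.sqrt_pos.mpr (by positivity)
      have hc2 : ∀ i : Fin n, (if (i : ℕ) < s then -t else t) ^ 2 = t ^ 2 := by
        intro i; by_cases h' : (i : ℕ) < s <;> simp [h']
      refine construct hn lam κ hκpos.ne' hμ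
        (fun i => ⟨-(1/2), if (i : ℕ) < s then -t else t⟩) ?_ ?_ ?_ hκpos.le
      · intro i
        rw [(abs_half_mk _).1, hc2 i, ← hκt]
      · intro i
        rw [(abs_half_mk _).2, hc2 i, ← hκt]
      · apply Complex.ext
        · rw [Complex.re_sum]
          simp only [Complex.sub_re, Complex.one_re, hlam]
          rw [Finset.sum_const, Finset.card_univ, Fintype.card_fin, nsmul_eq_mul]
          ring
        · rw [Complex.im_sum]
          simp only [Complex.sub_im, Complex.one_im]
          have hss := sum_signs n s (by omega) t
          rw [hss, htdef, mul_div_cancel₀ _ (by linarith : (n : ℝ) - 2 * s ≠ 0)]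
          ring
end

section
/- Let n ≥ 3 and let λ ∈ ℂ with Re(λ) = 1 − n/2. Then the matrix A = diag(1, …, 1, λ) ∈ ℂ^{n×n} is unitarily apportionable: there exists a unitary matrix U ∈ ℂ^{n×n} such that U A U* is uniform. (In fact the discrete Fourier transform matrix F, with (j,k)-entry n^{-1/2} ω^{(j−1)(k−1)} for ω = e^{−2πi/n}, works.) -/
open scoped Matrix

section Aux

open Complex Finset

/-- Orthogonality of DFT characters. -/
lemma dft_orth {n : ℕ} (hn : n ≠ 0) (j k : Fin n) :
    ∑ l : Fin n, Complex.exp (2 * Real.pi * Complex.I / n) ^ ((j : ℕ) * l) *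
      (starRingEnd ℂ) (Complex.exp (2 * Real.pi * Complex.I / n) ^ ((k : ℕ) * l)) =
      if j = k then (n : ℂ) else 0 := by
  set ω : ℂ := Complex.exp (2 * Real.pi * Complex.I / n) with hω
  have hprim : IsPrimitiveRoot ω n := Complex.isPrimitiveRoot_exp n hn
  have hωn : ω ^ n = 1 := hprim.pow_eq_one
  have hω0 : ω ≠ 0 := hprim.ne_zero hn
  have habs : ‖ω‖ = 1 := Complex.norm_eq_one_of_pow_eq_one hωn hn
  have hconj : ∀ m : ℕ, (starRingEnd ℂ) (ω ^ m) = (ω ^ m)⁻¹ := by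
    intro m
    have : ‖ω ^ m‖ = 1 := by rw [norm_pow, habs, one_pow]
    rw [Complex.inv_def, Complex.normSq_eq_norm_sq, this]
    simp
  have key : ∀ l : Fin n, ω ^ ((j : ℕ) * l) * (starRingEnd ℂ) (ω ^ ((k : ℕ) * l)) =
      (ω ^ (j : ℕ) * (ω ^ (k : ℕ))⁻¹) ^ (l : ℕ) := by
    intro l
    rw [hconj, mul_pow, inv_pow, ← pow_mul, ← pow_mul]
  simp only [key]
  rw [Fin.sum_univ_eq_sum_range (fun l => (ω ^ (j : ℕ) * (ω ^ (k : ℕ))⁻¹) ^ l) n]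
  rcases eq_or_ne j k with h | h
  · subst h
    simp [mul_inv_cancel₀ (pow_ne_zero (j : ℕ) hω0)]
  · have hne1 : ω ^ (j : ℕ) * (ω ^ (k : ℕ))⁻¹ ≠ 1 := by
      intro h1
      apply h
      have hk0 : ω ^ (k : ℕ) ≠ 0 := pow_ne_zero _ hω0
      have : ω ^ (j : ℕ) = ω ^ (k : ℕ) := by
        field_simp at h1; exact h1
      exact Fin.ext (hprim.pow_inj j.isLt k.isLt this)
    have hzn : (ω ^ (j : ℕ) * (ω ^ (k : ℕ))⁻¹) ^ n = 1 := by
      rw [mul_pow, inv_pow, ← pow_mul, ← pow_mul, mul_comm (j : ℕ) n, mul_comm (k : ℕ) n,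
        pow_mul, pow_mul, hωn, one_pow, one_pow]
      simp
    rw [geom_sum_eq hne1 n, hzn]
    simp [h]

end Aux

/-- For `n ≥ 3` and `λ` with `Re λ = 1 - n/2`, the matrix
`A = diag(1, …, 1, λ)` is unitarily apportionable: there is a unitary `U`
such that `U * A * Uᴴ` is uniform. -/
theorem id_oplus_lambda_unitarily_apportionable {n : ℕ} (hn : 3 ≤ n) (lam : ℂ)
    (hlam : lam.re = 1 - (n : ℝ) / 2) :
    ∃ U : Matrix (Fin n) (Fin n) ℂ, U ∈ Matrix.unitaryGroup (Fin n) ℂ ∧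
      IsUniform
        (U * Matrix.diagonal (fun i : Fin n => if (i : ℕ) = n - 1 then lam else 1) * Uᴴ) := by
  have hn0 : n ≠ 0 := by omega
  have hnpos : (0 : ℝ) < n := by positivity
  set ω : ℂ := Complex.exp (2 * Real.pi * Complex.I / n) with hω
  have hprim : IsPrimitiveRoot ω n := Complex.isPrimitiveRoot_exp n hn0
  have habsω : ∀ m : ℕ, ‖ω ^ m‖ = 1 := by
    intro m
    have h1 : ‖ω‖ = 1 := Complex.norm_eq_one_of_pow_eq_one hprim.pow_eq_one hn0
    rw [norm_pow, h1, one_pow]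
  set c : ℂ := ((Real.sqrt n : ℝ) : ℂ)⁻¹ with hc
  have hcsq : c * c = (n : ℂ)⁻¹ := by
    rw [hc, ← mul_inv, ← Complex.ofReal_mul, Real.mul_self_sqrt hnpos.le,
      Complex.ofReal_natCast]
  have hconjc : (starRingEnd ℂ) c = c := by
    rw [hc, ← Complex.ofReal_inv, Complex.conj_ofReal]
  have habsc : ‖c‖ = (Real.sqrt n)⁻¹ := by
    rw [hc, norm_inv, Complex.norm_of_nonneg (Real.sqrt_nonneg _)]
  set U : Matrix (Fin n) (Fin n) ℂ := Matrix.of (fun j k : Fin n => c * ω ^ ((j : ℕ) * k)) with hU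
  -- unitarity
  have hunit : U ∈ Matrix.unitaryGroup (Fin n) ℂ := by
    rw [Matrix.mem_unitaryGroup_iff]
    ext j k
    rw [Matrix.mul_apply]
    have hsummand : ∀ l : Fin n, U j l * (star U) l k =
        (c * c) * (ω ^ ((j : ℕ) * l) * (starRingEnd ℂ) (ω ^ ((k : ℕ) * l))) := by
      intro l
      simp only [hU, Matrix.star_apply, Matrix.of_apply, Complex.star_def, map_mul, hconjc]
      ring
    rw [Finset.sum_congr rfl (fun l _ => hsummand l), ← Finset.mul_sum, dft_orth hn0 j k]
    rcases eq_or_ne j k with h | h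
    · subst h
      rw [if_pos rfl, hcsq, inv_mul_cancel₀ (by exact_mod_cast hn0 : (n : ℂ) ≠ 0),
        Matrix.one_apply_eq]
    · rw [if_neg h, mul_zero, Matrix.one_apply_ne h]
  refine ⟨U, hunit, ‖lam - 1‖ / n, by positivity, ?_⟩
  set p : Fin n := ⟨n - 1, by omega⟩ with hp
  -- entry formula
  have hUU : U * (star U) = 1 := Matrix.mem_unitaryGroup_iff.mp hunit
  have hentry : ∀ j k : Fin n,
      (U * Matrix.diagonal (fun i : Fin n => if (i : ℕ) = n - 1 then lam else 1) * Uᴴ) j k =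
        (1 : Matrix (Fin n) (Fin n) ℂ) j k + (lam - 1) * (U j p * (starRingEnd ℂ) (U k p)) := by
    intro j k
    rw [Matrix.mul_apply]
    have step : ∀ l : Fin n,
        (U * Matrix.diagonal (fun i : Fin n => if (i : ℕ) = n - 1 then lam else 1)) j l *
          Uᴴ l k =
        U j l * (starRingEnd ℂ) (U k l) +
          (if l = p then (lam - 1) * (U j p * (starRingEnd ℂ) (U k p)) else 0) := by
      intro l
      rw [Matrix.mul_diagonal]
      have hiff : ((l : ℕ) = n - 1) ↔ l = p := by
        constructor
        · intro h; exact Fin.ext h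
        · intro h; rw [h]
      rcases eq_or_ne l p with h | h
      · rw [if_pos (hiff.mpr h), if_pos h, h]
        simp only [Matrix.conjTranspose_apply, Complex.star_def]
        ring
      · rw [if_neg (fun hh => h (hiff.mp hh)), if_neg h]
        simp only [Matrix.conjTranspose_apply, Complex.star_def]
        ring
    rw [Finset.sum_congr rfl (fun l _ => step l), Finset.sum_add_distrib,
      Finset.sum_ite_eq' Finset.univ p
        (fun _ => (lam - 1) * (U j p * (starRingEnd ℂ) (U k p)))]
    have hsum1 : ∑ l : Fin n, U j l * (starRingEnd ℂ) (U k l) =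
        (1 : Matrix (Fin n) (Fin n) ℂ) j k := by
      rw [← hUU, Matrix.mul_apply]
      rfl
    rw [hsum1]
    simp
  intro j k
  rw [hentry j k]
  rcases eq_or_ne j k with h | h
  · subst h
    -- diagonal entry
    have hUjp : U j p * (starRingEnd ℂ) (U j p) = (n : ℂ)⁻¹ := by
      rw [Complex.mul_conj, Complex.normSq_eq_norm_sq]
      have habsU : ‖U j p‖ = (Real.sqrt n)⁻¹ := by
        rw [hU]
        simp only [Matrix.of_apply, norm_mul, habsω, habsc, mul_one]
      have h2 : ((Real.sqrt n)⁻¹ ^ 2 : ℝ) = (n : ℝ)⁻¹ := by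
        rw [inv_pow, sq, Real.mul_self_sqrt hnpos.le]
      rw [habsU, h2, Complex.ofReal_inv, Complex.ofReal_natCast]
    rw [Matrix.one_apply_eq, hUjp]
    have hncne : (n : ℂ) ≠ 0 := by exact_mod_cast hn0
    have hval : (1 : ℂ) + (lam - 1) * (n : ℂ)⁻¹ = ((n : ℂ) - 1 + lam) / n := by
      field_simp
      ring
    rw [hval, norm_div, Complex.norm_natCast]
    congr 1
    -- |n - 1 + lam| = |lam - 1|
    have hre1 : ((n : ℂ) - 1 + lam).re = (n : ℝ) / 2 := by
      simp only [Complex.add_re, Complex.sub_re, Complex.natCast_re, Complex.one_re, hlam]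
      ring
    have him1 : ((n : ℂ) - 1 + lam).im = lam.im := by
      simp [Complex.add_im, Complex.sub_im]
    have hre2 : (lam - 1).re = -((n : ℝ) / 2) := by
      simp only [Complex.sub_re, Complex.one_re, hlam]; ring
    have him2 : (lam - 1).im = lam.im := by simp [Complex.sub_im]
    rw [Complex.norm_def, Complex.norm_def, Complex.normSq_apply, Complex.normSq_apply,
      hre1, him1, hre2, him2]
    ring_nf
  · -- off-diagonal entry
    rw [Matrix.one_apply_ne h, zero_add, norm_mul, norm_mul, Complex.norm_conj]
    have habsU : ∀ (a : Fin n), ‖U a p‖ = (Real.sqrt n)⁻¹ := by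
      intro a
      rw [hU]
      simp only [Matrix.of_apply, norm_mul, habsω, habsc, mul_one]
    rw [habsU, habsU, div_eq_mul_inv]
    congr 1
    rw [← mul_inv]
    congr 1
    rw [Real.mul_self_sqrt hnpos.le]
end

section
/- Let A ∈ ℂ^{2×2} have distinct nonzero eigenvalues λ₁ and λ₂ (i.e., the characteristic polynomial of A is (X − λ₁)(X − λ₂) with λ₁ ≠ λ₂ and λ₁, λ₂ ≠ 0), and let γ = (λ₂ + λ₁)/(λ₂ − λ₁). Then A is apportionable if and only if γ = 0, or Re(γ²) < |γ|⁴ ≤ 1. -/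
open Matrix Polynomial Complex

section Aux


lemma eig_col (A : Matrix (Fin 2) (Fin 2) ℂ) (a b : ℂ)
    (hz : (A - a • 1) * (A - b • 1) = 0) (hne : A ≠ b • 1) :
    ∃ v : Fin 2 → ℂ, (v 0 ≠ 0 ∨ v 1 ≠ 0) ∧
      A 0 0 * v 0 + A 0 1 * v 1 = a * v 0 ∧
      A 1 0 * v 0 + A 1 1 * v 1 = a * v 1 := by
  have hN : A - b • 1 ≠ 0 := sub_ne_zero.mpr hne
  have : ∃ i j, (A - b • 1) i j ≠ 0 := by
    by_contra h
    push_neg at h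
    exact hN (by ext i j; simpa using h i j)
  obtain ⟨i, j, hij⟩ := this
  refine ⟨fun i => (A - b • 1) i j, ?_, ?_, ?_⟩
  · fin_cases i
    · exact Or.inl hij
    · exact Or.inr hij
  · have h0 := congrFun (congrFun hz 0) j
    simp [Matrix.mul_apply, Fin.sum_univ_two, Matrix.sub_apply, Matrix.smul_apply,
      Matrix.one_apply, Matrix.zero_apply] at h0 ⊢
    ring_nf at h0 ⊢
    linear_combination h0
  · have h1 := congrFun (congrFun hz 1) j
    simp [Matrix.mul_apply, Fin.sum_univ_two, Matrix.sub_apply, Matrix.smul_apply,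
      Matrix.one_apply, Matrix.zero_apply] at h1 ⊢
    ring_nf at h1 ⊢
    linear_combination h1


lemma trace_det_of_charpoly (A : Matrix (Fin 2) (Fin 2) ℂ) (l1 l2 : ℂ)
    (hchar : A.charpoly = (X - C l1) * (X - C l2)) :
    A.trace = l1 + l2 ∧ A.det = l1 * l2 := by
  have hexp : (X - C l1) * (X - C l2) = X^2 - (C l1 + C l2) * X + C (l1 * l2) := by
    rw [C_mul]; ring
  have ht := Matrix.trace_eq_neg_charpoly_coeff A
  have hd := Matrix.det_eq_sign_charpoly_coeff A
  rw [hchar, hexp] at ht hd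
  rw [show (Fintype.card (Fin 2) - 1) = 1 from rfl] at ht
  rw [show (Fintype.card (Fin 2)) = 2 from rfl] at hd
  simp only [coeff_add, coeff_sub, coeff_X_pow, coeff_C_mul, coeff_C, coeff_X,
    coeff_mul_X, coeff_C_zero] at ht hd
  norm_num at ht hd
  constructor
  · exact ht
  · exact hd


lemma diag_sim (A : Matrix (Fin 2) (Fin 2) ℂ) (l1 l2 : ℂ) (h12 : l1 ≠ l2)
    (hchar : A.charpoly = (X - C l1) * (X - C l2)) :
    ∃ P : Matrix (Fin 2) (Fin 2) ℂ, IsUnit P.det ∧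
      A = P * !![l1, 0; 0, l2] * P⁻¹ := by
  obtain ⟨htr, hdet⟩ := trace_det_of_charpoly A l1 l2 hchar
  have hCH : (A - l1 • 1) * (A - l2 • 1) = 0 := by
    have h := Matrix.aeval_self_charpoly A
    rw [hchar] at h
    simpa [_root_.map_mul, map_sub, aeval_X, aeval_C, Algebra.algebraMap_eq_smul_one] using h
  have hCH' : (A - l2 • 1) * (A - l1 • 1) = 0 := by
    have : (A - l2 • 1) * (A - l1 • 1) = (A - l1 • 1) * (A - l2 • 1) := by
      simp only [sub_mul, mul_sub, smul_mul_assoc, mul_smul_comm, mul_one, one_mul,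
        smul_sub, smul_smul]
      rw [mul_comm l2 l1]
      abel
    rw [this, hCH]
  have htrsm : ∀ l : ℂ, (l • (1 : Matrix (Fin 2) (Fin 2) ℂ)).trace = 2 * l := by
    intro l; simp [Matrix.trace_smul, Matrix.trace_one]; ring
  have hne2 : A ≠ l2 • 1 := by
    intro h; apply h12
    have := htr; rw [h, htrsm] at this
    linear_combination -this
  have hne1 : A ≠ l1 • 1 := by
    intro h; apply h12
    have := htr; rw [h, htrsm] at this
    linear_combination this
  obtain ⟨v, hv, hv0, hv1⟩ := eig_col A l1 l2 hCH hne2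
  obtain ⟨w, hw, hw0, hw1⟩ := eig_col A l2 l1 hCH' hne1
  set P : Matrix (Fin 2) (Fin 2) ℂ := !![v 0, w 0; v 1, w 1] with hP
  have hdP : P.det = v 0 * w 1 - w 0 * v 1 := by simp [hP, Matrix.det_fin_two]
  have hl12 : l1 - l2 ≠ 0 := sub_ne_zero.mpr h12
  have hdetP : P.det ≠ 0 := by
    rw [hdP]
    intro hdd
    have hvw0 : v 0 * w 0 = 0 := by
      have : (l1 - l2) * (v 0 * w 0) = 0 := by linear_combination v 0 * hw0 - w 0 * hv0 - A 0 1 * hdd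
      rcases mul_eq_zero.mp this with h | h
      · exact absurd h hl12
      · exact h
    have hvw1 : v 1 * w 1 = 0 := by
      have : (l1 - l2) * (v 1 * w 1) = 0 := by linear_combination v 1 * hw1 - w 1 * hv1 + A 1 0 * hdd
      rcases mul_eq_zero.mp this with h | h
      · exact absurd h hl12
      · exact h
    have h0 : v 0 * w 1 = w 0 * v 1 := by linear_combination hdd
    rcases hv with hv | hv <;> rcases hw with hw | hw
    · exact hw (by have := mul_eq_zero.mp hvw0; tauto)
    · have hv1z : v 1 = 0 := by
        rcases mul_eq_zero.mp hvw1 with h | h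
        · exact h
        · exact absurd h hw
      have h1 : v 0 * w 1 = 0 := by rw [h0, hv1z]; ring
      rcases mul_eq_zero.mp h1 with h | h
      · exact hv h
      · exact hw h
    · have hv0z : v 0 = 0 := by
        rcases mul_eq_zero.mp hvw0 with h | h
        · exact h
        · exact absurd h hw
      have h1 : w 0 * v 1 = 0 := by rw [← h0, hv0z]; ring
      rcases mul_eq_zero.mp h1 with h | h
      · exact hw h
      · exact hv h
    · exact hw (by have := mul_eq_zero.mp hvw1; tauto)
  have hunit : IsUnit P.det := isUnit_iff_ne_zero.mpr hdetP
  have hAP : A * P = P * !![l1, 0; 0, l2] := by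
    ext i j
    fin_cases i <;> fin_cases j <;>
        simp [hP, Matrix.mul_apply, Fin.sum_univ_two]
    · linear_combination hv0
    · linear_combination hw0
    · linear_combination hv1
    · linear_combination hw1
  refine ⟨P, hunit, ?_⟩
  calc A = A * (P * P⁻¹) := by rw [Matrix.mul_nonsing_inv P hunit, mul_one]
    _ = (A * P) * P⁻¹ := by rw [mul_assoc]
    _ = P * !![l1, 0; 0, l2] * P⁻¹ := by rw [hAP]


lemma uniform_cond (B : Matrix (Fin 2) (Fin 2) ℂ) (t d : ℂ) (κ : ℝ)
    (hu : ∀ i j, ‖B i j‖ = κ) (htr : B.trace = t) (hdet : B.det = d)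
    (hd : d ≠ 0) (ht : t ≠ 0) :
    0 < (t^2 * (starRingEnd ℂ) d).re ∧
      (t^2 * (starRingEnd ℂ) d).re ≤ 2 * Complex.normSq d := by
  set a := B 0 0 with ha
  set b := B 1 1 with hb
  set e := B 0 1 with he
  set f := B 1 0 with hf
  have htr' : a + b = t := by rw [← htr, Matrix.trace_fin_two]
  have hdet' : a * b - e * f = d := by rw [← hdet, Matrix.det_fin_two]
  have hκ0 : 0 ≤ κ := (hu 0 0) ▸ norm_nonneg _
  have hκpos : 0 < κ := by
    rcases hκ0.lt_or_eq with h | h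
    · exact h
    · exfalso
      apply hd
      have hz : ∀ i j, B i j = 0 := fun i j => norm_eq_zero.mp (by rw [hu i j, ← h])
      rw [← hdet', ha, hb, he, hf, hz 0 0, hz 1 1, hz 0 1, hz 1 0]
      ring
  -- normSq of entries
  have hns : ∀ i j, Complex.normSq (B i j) = κ^2 := fun i j => by
    rw [← Complex.sq_norm, hu i j]
  have hna : Complex.normSq a = κ^2 := hns 0 0
  have hnb : Complex.normSq b = κ^2 := hns 1 1
  have hne : Complex.normSq e = κ^2 := hns 0 1
  have hnf : Complex.normSq f = κ^2 := hns 1 0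
  have hca : (starRingEnd ℂ) a * a = ((κ^2 : ℝ) : ℂ) := by
    rw [mul_comm, Complex.mul_conj, hna]
  have hcb : (starRingEnd ℂ) b * b = ((κ^2 : ℝ) : ℂ) := by
    rw [mul_comm, Complex.mul_conj, hnb]
  have hct : (starRingEnd ℂ) t = (starRingEnd ℂ) a + (starRingEnd ℂ) b := by
    rw [← htr', map_add]
  have hconj : (starRingEnd ℂ) t * (a * b) = ((κ^2 : ℝ) : ℂ) * t := by
    rw [hct, ← htr']
    linear_combination b * hca + a * hcb
  have hab : (a * b) * ((Complex.normSq t : ℝ) : ℂ) = ((κ^2 : ℝ) : ℂ) * t^2 := by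
    rw [← Complex.mul_conj t]
    linear_combination t * hconj
  -- normSq (a*b - d) = κ^4
  have hef : e * f = a * b - d := by linear_combination -hdet'
  have hnef : Complex.normSq (a * b - d) = κ^2 * κ^2 := by
    rw [← hef, Complex.normSq_mul, hne, hnf]
  have hre : (a * b * (starRingEnd ℂ) d).re = Complex.normSq d / 2 := by
    have h2 := Complex.normSq_sub (a*b) d
    rw [hnef, Complex.normSq_mul, hna, hnb] at h2
    linarith
  -- bridge
  set R := (t^2 * (starRingEnd ℂ) d).re with hR
  set nt := Complex.normSq t with hnt
  set nd := Complex.normSq d with hnd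
  have hntpos : 0 < nt := Complex.normSq_pos.mpr ht
  have hndpos : 0 < nd := Complex.normSq_pos.mpr hd
  have hbridge : κ^2 * R = (nd / 2) * nt := by
    have h3 : (a * b * (starRingEnd ℂ) d) * ((nt : ℝ) : ℂ) =
        ((κ^2 : ℝ) : ℂ) * (t^2 * (starRingEnd ℂ) d) := by
      linear_combination (starRingEnd ℂ) d * hab
    have h4 := congrArg Complex.re h3
    rw [Complex.re_mul_ofReal] at h4
    have h5 : (((κ^2:ℝ):ℂ) * (t^2 * (starRingEnd ℂ) d)).re = κ^2 * R := by
      rw [mul_comm, Complex.re_mul_ofReal, ← hR]; ring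
    rw [h5] at h4
    rw [← h4, hre]
  have hRval : R = nd * nt / (2 * κ^2) := by
    field_simp at hbridge ⊢
    linarith
  have hRpos : 0 < R := by
    rw [hRval]
    positivity
  -- |t| ≤ 2κ
  have htle : ‖t‖ ≤ 2 * κ := by
    rw [← htr']
    calc ‖a + b‖ ≤ ‖a‖ + ‖b‖ := norm_add_le a b
      _ = 2 * κ := by rw [hu 0 0, hu 1 1]; ring
  have hntle : nt ≤ 4 * κ^2 := by
    have := Complex.sq_norm t
    nlinarith [norm_nonneg t]
  refine ⟨hRpos, ?_⟩
  rw [hRval]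
  rw [div_le_iff₀ (by positivity)]
  nlinarith


lemma gamma_iff (t δ d γ : ℂ) (hδ : δ ≠ 0) (hd4 : 4 * d = t^2 - δ^2) (hγ : γ = t / δ) :
    (0 < (t^2 * (starRingEnd ℂ) d).re ∧
      (t^2 * (starRingEnd ℂ) d).re ≤ 2 * Complex.normSq d) ↔
    ((γ^2).re < ‖γ‖ ^ 4 ∧ ‖γ‖ ^ 4 ≤ 1) := by
  set R := (t^2 * (starRingEnd ℂ) d).re with hR
  set X := (t^2 * (starRingEnd ℂ) (δ^2)).re with hX
  set nt := Complex.normSq t with hnt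
  set nd := Complex.normSq d with hnd
  set nδ := Complex.normSq δ with hnδ
  set G4 := ‖γ‖ ^ 4 with hG4
  set G2 := (γ^2).re with hG2
  have hnδpos : 0 < nδ := Complex.normSq_pos.mpr hδ
  have hpow : ∀ z : ℂ, Complex.normSq (z^2) = Complex.normSq z ^ 2 := fun z => by
    rw [map_pow]
  have hnδ2 : 0 < nδ^2 := by positivity
  -- F1 : G4 * nδ^2 = nt^2
  have F1 : G4 * nδ^2 = nt^2 := by
    have h1 : G4 = (Complex.normSq γ)^2 := by
      rw [hG4, ← Complex.sq_norm]; ring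
    rw [h1, hγ, Complex.normSq_div, ← hnt, ← hnδ]
    field_simp
  -- F2 : G2 * nδ^2 = X
  have F2 : G2 * nδ^2 = X := by
    have e1 : t^2 = γ^2 * δ^2 := by rw [hγ]; field_simp
    have e2 : t^2 * (starRingEnd ℂ) (δ^2) = γ^2 * ((Complex.normSq (δ^2) : ℝ) : ℂ) := by
      rw [e1, mul_assoc, Complex.mul_conj]
    rw [hX, e2, Complex.re_mul_ofReal, hpow, ← hnδ, ← hG2]
  -- F3 : 4 * R = nt^2 - X
  have F3 : 4 * R = nt^2 - X := by
    have hc : (starRingEnd ℂ) (4 * d) = (starRingEnd ℂ) (t^2) - (starRingEnd ℂ) (δ^2) := by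
      rw [hd4, map_sub]
    have hc4 : (starRingEnd ℂ) (4 * d) = 4 * (starRingEnd ℂ) d := by
      rw [_root_.map_mul, map_ofNat]
    have e3 : t^2 * (starRingEnd ℂ) d * 4 =
        t^2 * (starRingEnd ℂ) (t^2) - t^2 * (starRingEnd ℂ) (δ^2) := by
      rw [hc4] at hc
      linear_combination t^2 * hc
    have e4 : (t^2 * (starRingEnd ℂ) (t^2)).re = nt^2 := by
      rw [Complex.mul_conj, hpow]
      simp [← Complex.ofReal_pow, hnt]
    have e5 := congrArg Complex.re e3
    rw [Complex.sub_re, e4, ← hX] at e5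
    have e6 : (t^2 * (starRingEnd ℂ) d * 4).re = R * 4 := by
      simp [Complex.mul_re, hR]
    rw [e6] at e5
    linarith
  -- F4 : 16 * nd - 8 * R = nδ^2 - nt^2
  have F4 : 16 * nd - 8 * R = nδ^2 - nt^2 := by
    have h16 : Complex.normSq (4 * d) = 16 * nd := by
      rw [_root_.map_mul]
      norm_num [Complex.normSq_apply, hnd]
    rw [hd4] at h16
    have hsub := Complex.normSq_sub (t^2) (δ^2)
    rw [hpow, hpow, ← hnt, ← hnδ, ← hX] at hsub
    rw [hsub] at h16
    linarith
  constructor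
  · rintro ⟨hpos, hle⟩
    constructor
    · nlinarith
    · nlinarith
  · rintro ⟨hlt, hle⟩
    constructor
    · nlinarith
    · nlinarith


lemma abs_eq_of_normSq {z : ℂ} {k : ℝ} (hk : 0 ≤ k) (h : Complex.normSq z = k^2) :
    ‖z‖ = k := by
  rw [Complex.norm_def, h, Real.sqrt_sq hk]

lemma exists_uniform_t0 (d : ℂ) (hd : d ≠ 0) :
    ∃ (B : Matrix (Fin 2) (Fin 2) ℂ) (κ : ℝ), 0 ≤ κ ∧
      (∀ i j, ‖B i j‖ = κ) ∧
      B 0 0 + B 1 1 = 0 ∧ B 0 0 * B 1 1 - B 0 1 * B 1 0 = d := by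
  set ω : ℂ := ⟨-(1/2), Real.sqrt 3 / 2⟩ with hω
  have h3 : Real.sqrt 3 ^ 2 = 3 := Real.sq_sqrt (by norm_num)
  have hnω : Complex.normSq ω = 1 := by
    rw [hω, Complex.normSq_mk]; nlinarith
  have hn1ω : Complex.normSq (1 + ω) = 1 := by
    have : (1 + ω) = ⟨1/2, Real.sqrt 3 / 2⟩ := by
      rw [hω]; apply Complex.ext <;> simp <;> norm_num
    rw [this, Complex.normSq_mk]; nlinarith
  have hωne : ω ≠ 0 := by
    intro h; rw [h] at hnω; simp at hnω
  obtain ⟨a, ha2⟩ := IsAlgClosed.exists_pow_nat_eq (d * ω) (n := 2) (by norm_num)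
  have hane : a ≠ 0 := by
    intro h; rw [h] at ha2
    exact (mul_ne_zero hd hωne) (by simpa using ha2.symm)
  set κ := ‖a‖ with hκ
  have hκpos : 0 < κ := norm_pos_iff.mpr hane
  have hκ2 : κ^2 = ‖d‖ := by
    rw [hκ, ← norm_pow, ha2, norm_mul]
    have : ‖ω‖ = 1 := abs_eq_of_normSq (by norm_num) (by rw [hnω]; norm_num)
    rw [this, mul_one]
  have hκC : (κ : ℂ) ≠ 0 := by
    simp [Complex.ofReal_ne_zero]; positivity
  set B : Matrix (Fin 2) (Fin 2) ℂ := !![a, (κ:ℂ); -(a^2 + d)/(κ:ℂ), -a] with hB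
  have hB00 : B 0 0 = a := by rw [hB]; simp
  have hB01 : B 0 1 = (κ:ℂ) := by rw [hB]; simp
  have hB10 : B 1 0 = -(a^2 + d)/(κ:ℂ) := by rw [hB]; simp
  have hB11 : B 1 1 = -a := by rw [hB]; simp
  refine ⟨B, κ, le_of_lt hκpos, ?_, ?_, ?_⟩
  · intro i j
    fin_cases i <;> fin_cases j
    · rw [show B ⟨0, by norm_num⟩ ⟨0, by norm_num⟩ = B 0 0 from rfl, hB00]
    · rw [show B ⟨0, by norm_num⟩ ⟨1, by norm_num⟩ = B 0 1 from rfl, hB01]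
      simp [abs_of_pos hκpos]
    · rw [show B ⟨1, by norm_num⟩ ⟨0, by norm_num⟩ = B 1 0 from rfl, hB10]
      rw [norm_div, norm_neg]
      have had : a^2 + d = d * (1 + ω) := by rw [ha2]; ring
      rw [had, norm_mul]
      have h1 : ‖1 + ω‖ = 1 := abs_eq_of_normSq (by norm_num) (by rw [hn1ω]; norm_num)
      rw [h1, mul_one, Complex.norm_real, Real.norm_eq_abs, abs_of_pos hκpos]
      rw [← hκ2]
      field_simp
    · rw [show B ⟨1, by norm_num⟩ ⟨1, by norm_num⟩ = B 1 1 from rfl, hB11]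
      simp [hκ]
  · rw [hB00, hB11]; ring
  · rw [hB00, hB11, hB01, hB10]
    field_simp
    ring


lemma abs_eq_of_normSq' {z : ℂ} {k : ℝ} (hk : 0 ≤ k) (h : Complex.normSq z = k^2) :
    ‖z‖ = k := by
  rw [Complex.norm_def, h, Real.sqrt_sq hk]

lemma exists_uniform_tne (t d : ℂ) (hd : d ≠ 0) (ht : t ≠ 0)
    (hpos : 0 < (t^2 * (starRingEnd ℂ) d).re)
    (hle : (t^2 * (starRingEnd ℂ) d).re ≤ 2 * Complex.normSq d) :
    ∃ (B : Matrix (Fin 2) (Fin 2) ℂ) (κ : ℝ), 0 ≤ κ ∧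
      (∀ i j, ‖B i j‖ = κ) ∧
      B 0 0 + B 1 1 = t ∧ B 0 0 * B 1 1 - B 0 1 * B 1 0 = d := by
  set R := (t^2 * (starRingEnd ℂ) d).re with hR
  set nt := Complex.normSq t with hnt
  set nd := Complex.normSq d with hnd
  have hntpos : 0 < nt := Complex.normSq_pos.mpr ht
  have hndpos : 0 < nd := Complex.normSq_pos.mpr hd
  set K : ℝ := Real.sqrt (nt * nd / (2 * R)) with hK
  have hK2 : K^2 = nt * nd / (2 * R) := Real.sq_sqrt (by positivity)
  have hKpos : 0 < K := Real.sqrt_pos.mpr (by positivity)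
  have hK2ge : nt ≤ 4 * K^2 := by
    rw [hK2]
    have h4 : 4 * (nt * nd / (2 * R)) = 2 * nt * nd / R := by ring
    rw [h4, le_div_iff₀ hpos]
    nlinarith
  set r : ℝ := Real.sqrt (4 * K^2 - nt) with hr
  have hr2 : r^2 = 4 * K^2 - nt := Real.sq_sqrt (by linarith)
  set at' : ℝ := ‖t‖ with hat
  have hatpos : 0 < at' := norm_pos_iff.mpr ht
  have hat2 : at'^2 = nt := Complex.sq_norm t
  have hatne : ((at' : ℝ) : ℂ) ≠ 0 := Complex.ofReal_ne_zero.mpr (ne_of_gt hatpos)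
  set a : ℂ := t * ((at' : ℂ) + (r : ℂ) * Complex.I) / (2 * (at' : ℂ)) with ha
  set b : ℂ := t * ((at' : ℂ) - (r : ℂ) * Complex.I) / (2 * (at' : ℂ)) with hb
  -- normSq of a and b
  have hnplus : Complex.normSq ((at' : ℂ) + (r : ℂ) * Complex.I) = 4 * K^2 := by
    rw [Complex.normSq_add_mul_I]
    rw [hat2]; linarith
  have hnminus : Complex.normSq ((at' : ℂ) - (r : ℂ) * Complex.I) = 4 * K^2 := by
    have : (at' : ℂ) - (r : ℂ) * Complex.I = (at' : ℂ) + ((-r : ℝ) : ℂ) * Complex.I := by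
      push_cast; ring
    rw [this, Complex.normSq_add_mul_I, hat2]
    nlinarith
  have hn2at : Complex.normSq (2 * (at' : ℂ)) = 4 * nt := by
    rw [Complex.normSq_mul, Complex.normSq_ofReal]
    norm_num [Complex.normSq_apply]
    nlinarith
  have hna : Complex.normSq a = K^2 := by
    rw [ha, Complex.normSq_div, Complex.normSq_mul, hnplus, hn2at, ← hnt]
    field_simp
  have hnb : Complex.normSq b = K^2 := by
    rw [hb, Complex.normSq_div, Complex.normSq_mul, hnminus, hn2at, ← hnt]
    field_simp
  -- a + b = t
  have hsum : a + b = t := by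
    rw [ha, hb]
    field_simp
    ring
  -- a * b = t^2 * K^2 / nt
  have hntC : ((nt : ℝ) : ℂ) ≠ 0 := Complex.ofReal_ne_zero.mpr (ne_of_gt hntpos)
  have e2 : ((at' : ℂ))^2 = ((nt : ℝ) : ℂ) := by rw [← Complex.ofReal_pow, hat2]
  have e3 : ((at' : ℂ))^2 + ((r : ℂ))^2 = ((4 * K^2 : ℝ) : ℂ) := by
    rw [← Complex.ofReal_pow, ← Complex.ofReal_pow]
    push_cast [hat2, hr2]
    ring
  have e : a * b * (4 * ((at' : ℂ))^2) = t^2 * (((at' : ℂ))^2 + ((r : ℂ))^2) := by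
    rw [ha, hb]
    field_simp
    linear_combination (-4 * ((r : ℂ))^2) * Complex.I_sq
  rw [e3, e2] at e
  have hprod : a * b = t^2 * ((K^2 / nt : ℝ) : ℂ) := by
    apply mul_right_cancel₀ (show (4:ℂ) * ((nt:ℝ):ℂ) ≠ 0 by simp [hntC])
    have h5 : t^2 * ((4 * K^2 : ℝ):ℂ) = t^2 * ((K^2/nt : ℝ):ℂ) * (4 * ((nt:ℝ):ℂ)) := by
      push_cast
      field_simp
    rw [← mul_assoc] at e ⊢
    rw [show a * b * 4 * ((nt:ℝ):ℂ) = a * b * (4 * ((nt:ℝ):ℂ)) from by ring] at e ⊢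
    rw [e, h5]
  -- normSq (a*b - d) = K^4
  have habd : (a * b * (starRingEnd ℂ) d).re = K^2 / nt * R := by
    have : a * b * (starRingEnd ℂ) d = ((K^2 / nt : ℝ) : ℂ) * (t^2 * (starRingEnd ℂ) d) := by
      rw [hprod]; ring
    rw [this, Complex.re_ofReal_mul, ← hR]
  have hKR : K^2 / nt * R = nd / 2 := by
    rw [hK2]
    field_simp
  have hnabd : Complex.normSq (a * b - d) = K^2 * K^2 := by
    rw [Complex.normSq_sub, Complex.normSq_mul, hna, hnb, habd, hKR, ← hnd]
    ring
  have hKC : ((K : ℝ) : ℂ) ≠ 0 := Complex.ofReal_ne_zero.mpr (ne_of_gt hKpos)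
  set B : Matrix (Fin 2) (Fin 2) ℂ := !![a, (K:ℂ); (a*b - d)/(K:ℂ), b] with hB
  have hB00 : B 0 0 = a := by rw [hB]; simp
  have hB01 : B 0 1 = (K:ℂ) := by rw [hB]; simp
  have hB10 : B 1 0 = (a*b - d)/(K:ℂ) := by rw [hB]; simp
  have hB11 : B 1 1 = b := by rw [hB]; simp
  refine ⟨B, K, le_of_lt hKpos, ?_, ?_, ?_⟩
  · intro i j
    fin_cases i <;> fin_cases j
    · rw [show B ⟨0, by norm_num⟩ ⟨0, by norm_num⟩ = B 0 0 from rfl, hB00]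
      exact abs_eq_of_normSq' (le_of_lt hKpos) hna
    · rw [show B ⟨0, by norm_num⟩ ⟨1, by norm_num⟩ = B 0 1 from rfl, hB01]
      simp [abs_of_pos hKpos]
    · rw [show B ⟨1, by norm_num⟩ ⟨0, by norm_num⟩ = B 1 0 from rfl, hB10]
      apply abs_eq_of_normSq' (le_of_lt hKpos)
      rw [Complex.normSq_div, hnabd, Complex.normSq_ofReal]
      field_simp
    · rw [show B ⟨1, by norm_num⟩ ⟨1, by norm_num⟩ = B 1 1 from rfl, hB11]
      exact abs_eq_of_normSq' (le_of_lt hKpos) hnb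
  · rw [hB00, hB11]; exact hsum
  · rw [hB00, hB11, hB01, hB10]
    field_simp
    ring


lemma charpoly_eq (B : Matrix (Fin 2) (Fin 2) ℂ) (l1 l2 : ℂ)
    (hs : B 0 0 + B 1 1 = l1 + l2) (hp : B 0 0 * B 1 1 - B 0 1 * B 1 0 = l1 * l2) :
    B.charpoly = (X - C l1) * (X - C l2) := by
  have hdet : B.charpoly = (X - C (B 0 0)) * (X - C (B 1 1)) - (-C (B 0 1)) * (-C (B 1 0)) := by
    rw [Matrix.charpoly, Matrix.det_fin_two]
    rw [Matrix.charmatrix_apply_eq, Matrix.charmatrix_apply_eq,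
      Matrix.charmatrix_apply_ne _ _ _ (by decide), Matrix.charmatrix_apply_ne _ _ _ (by decide)]
  have h1 : C (B 0 0) + C (B 1 1) = C l1 + C l2 := by rw [← C_add, ← C_add, hs]
  have h2 : C (B 0 0) * C (B 1 1) - C (B 0 1) * C (B 1 0) = C l1 * C l2 := by
    rw [← C_mul, ← C_mul, ← C_sub, ← C_mul, hp]
  rw [hdet]
  linear_combination (-(X : Polynomial ℂ)) * h1 + h2

lemma similar_conj (A B P Q : Matrix (Fin 2) (Fin 2) ℂ) (D : Matrix (Fin 2) (Fin 2) ℂ)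
    (hP : IsUnit P.det) (hQ : IsUnit Q.det)
    (hA : A = P * D * P⁻¹) (hB : B = Q * D * Q⁻¹) :
    ∃ M : Matrix (Fin 2) (Fin 2) ℂ, IsUnit M ∧ M * A * M⁻¹ = B := by
  have c1 : P⁻¹ * P = 1 := Matrix.nonsing_inv_mul P hP
  have c2 : Q * Q⁻¹ = 1 := by rw [Matrix.mul_nonsing_inv Q hQ]
  refine ⟨Q * P⁻¹, ?_, ?_⟩
  · rw [Matrix.isUnit_iff_isUnit_det, Matrix.det_mul, Matrix.det_nonsing_inv]
    exact hQ.mul (isUnit_ringInverse.mpr hP)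
  · have hMinv : (Q * P⁻¹)⁻¹ = P * Q⁻¹ := by
      rw [Matrix.mul_inv_rev, Matrix.nonsing_inv_nonsing_inv P hP]
    rw [hA, hB, hMinv]
    have : Q * P⁻¹ * (P * D * P⁻¹) * (P * Q⁻¹) =
        Q * ((P⁻¹ * P) * D * (P⁻¹ * P)) * Q⁻¹ := by
      simp only [Matrix.mul_assoc]
    rw [this, c1, Matrix.one_mul, Matrix.mul_one]

end Aux

/-- A `2 × 2` complex matrix with distinct nonzero eigenvalues `λ₁, λ₂` is
apportionable iff `γ = 0` or `Re(γ²) < |γ|⁴ ≤ 1`, where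
`γ = (λ₂ + λ₁) / (λ₂ - λ₁)`. -/
theorem two_by_two_apportionable_iff (A : Matrix (Fin 2) (Fin 2) ℂ) (l1 l2 : ℂ)
    (h1 : l1 ≠ 0) (h2 : l2 ≠ 0) (h12 : l1 ≠ l2)
    (hchar : A.charpoly =
      (Polynomial.X - Polynomial.C l1) * (Polynomial.X - Polynomial.C l2)) :
    IsApportionable A ↔
      (l2 + l1) / (l2 - l1) = 0 ∨
        ((((l2 + l1) / (l2 - l1)) ^ 2).re < ‖(l2 + l1) / (l2 - l1)‖ ^ 4 ∧
          ‖(l2 + l1) / (l2 - l1)‖ ^ 4 ≤ 1) := by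
  obtain ⟨htr, hdet⟩ := trace_det_of_charpoly A l1 l2 hchar
  have hδ : l2 - l1 ≠ 0 := sub_ne_zero.mpr (Ne.symm h12)
  have hd : l1 * l2 ≠ 0 := mul_ne_zero h1 h2
  have hd4 : 4 * (l1*l2) = (l2+l1)^2 - (l2-l1)^2 := by ring
  have hgiff := gamma_iff (l2+l1) (l2-l1) (l1*l2) ((l2+l1)/(l2-l1)) hδ hd4 rfl
  constructor
  · rintro ⟨M, hM, hUni⟩
    obtain ⟨κ, hκ0, hu⟩ := hUni
    have hMdet : IsUnit M.det := (Matrix.isUnit_iff_isUnit_det M).mp hM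
    have hm0 : M.det ≠ 0 := hMdet.ne_zero
    have hBtr : (M * A * M⁻¹).trace = l1 + l2 := by
      rw [Matrix.trace_mul_cycle, Matrix.nonsing_inv_mul M hMdet, Matrix.one_mul, htr]
    have hBdet : (M * A * M⁻¹).det = l1 * l2 := by
      rw [Matrix.det_mul, Matrix.det_mul, Matrix.det_nonsing_inv, hdet,
        Ring.inverse_eq_inv']
      field_simp
    by_cases ht0 : l1 + l2 = 0
    · left
      rw [_root_.div_eq_zero_iff]; left; rw [add_comm]; exact ht0
    · right
      have hcond := uniform_cond (M*A*M⁻¹) (l1+l2) (l1*l2) κ hu hBtr hBdet hd ht0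
      rw [show l1 + l2 = l2 + l1 from add_comm l1 l2] at hcond
      exact hgiff.mp hcond
  · intro hcase
    have hBex : ∃ (B : Matrix (Fin 2) (Fin 2) ℂ) (κ : ℝ), 0 ≤ κ ∧
        (∀ i j, ‖B i j‖ = κ) ∧ B 0 0 + B 1 1 = l1 + l2 ∧
        B 0 0 * B 1 1 - B 0 1 * B 1 0 = l1 * l2 := by
      rcases hcase with hγ0 | hineq
      · have ht0 : l1 + l2 = 0 := by
          rw [_root_.div_eq_zero_iff] at hγ0
          rcases hγ0 with h | h
          · rw [add_comm]; exact h
          · exact absurd h hδ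
        obtain ⟨B, κ, h0, h1', h2', h3'⟩ := exists_uniform_t0 (l1*l2) hd
        exact ⟨B, κ, h0, h1', by rw [h2', ht0], h3'⟩
      · have hT : l2 + l1 ≠ 0 := by
          intro h
          rw [show (l2+l1)/(l2-l1) = 0 from by rw [h]; simp] at hineq
          simp at hineq
        have hcond := hgiff.mpr hineq
        obtain ⟨B, κ, h0, h1', h2', h3'⟩ :=
          exists_uniform_tne (l2+l1) (l1*l2) hd hT hcond.1 hcond.2
        exact ⟨B, κ, h0, h1', by rw [h2', add_comm], h3'⟩
    obtain ⟨B, κ, hκ0, hu, hBtr, hBdet⟩ := hBex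
    have hcharB : B.charpoly = (X - C l1) * (X - C l2) := charpoly_eq B l1 l2 hBtr hBdet
    obtain ⟨P, hP, hA⟩ := diag_sim A l1 l2 h12 hchar
    obtain ⟨Q, hQ, hB⟩ := diag_sim B l1 l2 h12 hcharB
    obtain ⟨M, hM, hMAM⟩ := similar_conj A B P Q _ hP hQ hA hB
    exact ⟨M, hM, κ, hκ0, by rw [hMAM]; exact hu⟩
end

section
/- For every n ≥ 1, the block diagonal matrix I_n ⊕ O_n ∈ ℂ^{2n×2n} is apportionable and its set of apportionment constants is K(I_n ⊕ O_n) = [1/2, ∞). -/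
open Matrix Complex

namespace ApportionAux

noncomputable def aval (κ : ℝ) : ℂ := (1/2 : ℝ) + (Real.sqrt (κ^2 - 1/4) : ℝ) * Complex.I

noncomputable def Xm (n : ℕ) (κ : ℝ) : Matrix (Fin n) (Fin n) ℂ :=
  Matrix.of fun i j => if i = j then aval κ else (κ : ℂ)

lemma abs_aval {κ : ℝ} (hκ : 1/2 ≤ κ) : ‖aval κ‖ = κ := by
  have h0 : (0:ℝ) ≤ κ ^ 2 - 1/4 := by nlinarith
  have hκ0 : (0:ℝ) ≤ κ := by linarith
  rw [aval, Complex.norm_add_mul_I, Real.sq_sqrt h0]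
  rw [show (1/2:ℝ)^2 + (κ^2 - 1/4) = κ^2 by ring, Real.sqrt_sq hκ0]

lemma abs_one_sub_aval {κ : ℝ} (hκ : 1/2 ≤ κ) : ‖1 - aval κ‖ = κ := by
  have h0 : (0:ℝ) ≤ κ ^ 2 - 1/4 := by nlinarith
  have hκ0 : (0:ℝ) ≤ κ := by linarith
  have h : 1 - aval κ = ((1/2 : ℝ) : ℂ) + ((-(Real.sqrt (κ^2 - 1/4)) : ℝ) : ℂ) * Complex.I := by
    rw [aval]; push_cast; ring
  rw [h, Complex.norm_add_mul_I]
  rw [show (1/2:ℝ)^2 + (-(Real.sqrt (κ^2-1/4)))^2 = (1/2:ℝ)^2 + (Real.sqrt (κ^2-1/4))^2 by ring,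
    Real.sq_sqrt h0]
  rw [show (1/2:ℝ)^2 + (κ^2 - 1/4) = κ^2 by ring, Real.sqrt_sq hκ0]

lemma key {n : ℕ} {κ : ℝ} (hκ : 1/2 ≤ κ) :
    IsApportionmentConstant
      (Matrix.fromBlocks (1 : Matrix (Fin n) (Fin n) ℂ) 0 0 (0 : Matrix (Fin n) (Fin n) ℂ)) κ := by
  have hκ0 : (0:ℝ) ≤ κ := by linarith
  set X := Xm n κ with hX
  set M : Matrix (Fin n ⊕ Fin n) (Fin n ⊕ Fin n) ℂ := Matrix.fromBlocks X 1 (1 - X) (-1) with hM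
  set N : Matrix (Fin n ⊕ Fin n) (Fin n ⊕ Fin n) ℂ := Matrix.fromBlocks 1 1 (1 - X) (-X) with hN
  have hMN : M * N = 1 := by
    rw [hM, hN, Matrix.fromBlocks_multiply]
    rw [show X * 1 + 1 * (1 - X) = (1 : Matrix (Fin n) (Fin n) ℂ) by noncomm_ring,
      show X * 1 + 1 * (-X) = (0 : Matrix (Fin n) (Fin n) ℂ) by noncomm_ring,
      show (1 - X) * 1 + (-1) * (1 - X) = (0 : Matrix (Fin n) (Fin n) ℂ) by noncomm_ring,
      show (1 - X) * 1 + (-1) * (-X) = (1 : Matrix (Fin n) (Fin n) ℂ) by noncomm_ring,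
      Matrix.fromBlocks_one]
  have hNM : N * M = 1 := by
    rw [hM, hN, Matrix.fromBlocks_multiply]
    rw [show (1:Matrix (Fin n) (Fin n) ℂ) * X + 1 * (1 - X) = 1 by noncomm_ring,
      show (1:Matrix (Fin n) (Fin n) ℂ) * 1 + 1 * (-1) = 0 by noncomm_ring,
      show (1 - X) * X + (-X) * (1 - X) = (0 : Matrix (Fin n) (Fin n) ℂ) by noncomm_ring,
      show (1 - X) * 1 + (-X) * (-1) = (1 : Matrix (Fin n) (Fin n) ℂ) by noncomm_ring,
      Matrix.fromBlocks_one]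
  have hUnit : IsUnit M := ⟨⟨M, N, hMN, hNM⟩, rfl⟩
  have hinv : M⁻¹ = N := Matrix.inv_eq_right_inv hMN
  refine ⟨hκ0, M, hUnit, ?_⟩
  have hMAN : M * Matrix.fromBlocks (1 : Matrix (Fin n) (Fin n) ℂ) 0 0 0 * N
      = Matrix.fromBlocks X X (1 - X) (1 - X) := by
    rw [hM, hN, Matrix.fromBlocks_multiply, Matrix.fromBlocks_multiply]
    rw [show X * 1 + 1 * 0 = X by noncomm_ring,
      show X * 0 + 1 * 0 = (0 : Matrix (Fin n) (Fin n) ℂ) by noncomm_ring,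
      show (1 - X) * 1 + (-1) * 0 = 1 - X by noncomm_ring,
      show (1 - X) * 0 + (-1) * 0 = (0 : Matrix (Fin n) (Fin n) ℂ) by noncomm_ring]
    rw [show X * 1 + 0 * (1 - X) = X by noncomm_ring,
      show X * 1 + 0 * (-X) = X by noncomm_ring,
      show (1 - X) * 1 + 0 * (1 - X) = 1 - X by noncomm_ring,
      show (1 - X) * 1 + 0 * (-X) = 1 - X by noncomm_ring]
  rw [hinv, hMAN]
  have habsX : ∀ i j, ‖X i j‖ = κ := by
    intro i j
    rw [hX, Xm]
    by_cases h : i = j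
    · simp only [Matrix.of_apply, if_pos h]; exact abs_aval hκ
    · simp only [Matrix.of_apply, if_neg h]
      rw [Complex.norm_real, Real.norm_eq_abs]; exact _root_.abs_of_nonneg hκ0
  have habsX' : ∀ i j, ‖(1 - X) i j‖ = κ := by
    intro i j
    have hsub : (1 - X) i j = (1 : Matrix (Fin n) (Fin n) ℂ) i j - X i j := by
      simp [Matrix.sub_apply]
    rw [hsub]
    by_cases h : i = j
    · subst h
      rw [Matrix.one_apply_eq, hX, Xm]
      simpa using abs_one_sub_aval hκ
    · rw [Matrix.one_apply_ne h, hX, Xm]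
      simp only [Matrix.of_apply, if_neg h, zero_sub, norm_neg]
      rw [Complex.norm_real, Real.norm_eq_abs]; exact _root_.abs_of_nonneg hκ0
  rintro (i | i) (j | j)
  · rw [Matrix.fromBlocks_apply₁₁]; exact habsX i j
  · rw [Matrix.fromBlocks_apply₁₂]; exact habsX i j
  · rw [Matrix.fromBlocks_apply₂₁]; exact habsX' i j
  · rw [Matrix.fromBlocks_apply₂₂]; exact habsX' i j

lemma lower {n : ℕ} (hn : 1 ≤ n) {κ : ℝ}
    (h : IsApportionmentConstant
      (Matrix.fromBlocks (1 : Matrix (Fin n) (Fin n) ℂ) 0 0 (0 : Matrix (Fin n) (Fin n) ℂ)) κ) :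
    1/2 ≤ κ := by
  obtain ⟨hκ0, M, hUnit, hmod⟩ := h
  set A := Matrix.fromBlocks (1 : Matrix (Fin n) (Fin n) ℂ) 0 0 (0 : Matrix (Fin n) (Fin n) ℂ)
    with hA
  have hdet : IsUnit M.det := (Matrix.isUnit_iff_isUnit_det M).mp hUnit
  have htr : (M * A * M⁻¹).trace = A.trace := by
    rw [Matrix.trace_mul_comm, ← Matrix.mul_assoc, Matrix.nonsing_inv_mul M hdet, Matrix.one_mul]
  have htrA : A.trace = (n : ℂ) := by
    simp [hA, Matrix.trace, Matrix.diag, Fintype.sum_sum_type, Matrix.fromBlocks_apply₁₁,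
      Matrix.fromBlocks_apply₂₂, Matrix.one_apply]
  have hle : (n : ℝ) ≤ (2 * n) * κ := by
    have h1 : ‖(M * A * M⁻¹).trace‖ = (n : ℝ) := by
      rw [htr, htrA, Complex.norm_natCast]
    have h2 : ‖(M * A * M⁻¹).trace‖ ≤ ∑ _i : Fin n ⊕ Fin n, κ := by
      calc ‖(M * A * M⁻¹).trace‖
          ≤ ∑ i : Fin n ⊕ Fin n, ‖(M * A * M⁻¹) i i‖ :=
            norm_sum_le _ _
        _ = ∑ _i : Fin n ⊕ Fin n, κ :=
            Finset.sum_congr rfl fun i _ => hmod i i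
    have h3 : (∑ _i : Fin n ⊕ Fin n, κ) = (2 * n) * κ := by
      rw [Finset.sum_const, Finset.card_univ, Fintype.card_sum, Fintype.card_fin, nsmul_eq_mul]
      push_cast; ring
    rw [h1, h3] at h2
    exact h2
  have hn' : (0:ℝ) < n := by exact_mod_cast hn
  nlinarith

end ApportionAux

/-- For every `n ≥ 1`, the block diagonal matrix `I_n ⊕ O_n` is apportionable
with set of apportionment constants `[1/2, ∞)`. -/
theorem apportionable_id_oplus_zero {n : ℕ} (hn : 1 ≤ n) :
    IsApportionable
        (Matrix.fromBlocks (1 : Matrix (Fin n) (Fin n) ℂ) 0 0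
          (0 : Matrix (Fin n) (Fin n) ℂ)) ∧
      apportionmentConstants
          (Matrix.fromBlocks (1 : Matrix (Fin n) (Fin n) ℂ) 0 0
            (0 : Matrix (Fin n) (Fin n) ℂ)) = Set.Ici (1 / 2 : ℝ) := by
  constructor
  · obtain ⟨hκ0, M, hU, hmod⟩ := ApportionAux.key (n := n) (κ := 1/2) le_rfl
    exact ⟨M, hU, ⟨1/2, by norm_num, hmod⟩⟩
  · ext κ
    simp only [apportionmentConstants, Set.mem_setOf_eq, Set.mem_Ici]
    exact ⟨fun h => ApportionAux.lower hn h, fun h => ApportionAux.key h⟩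
end
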